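/- arXiv:2211.12582 — 6 statements merged into one kernel-verified Lean document; each statement's English description precedes it below -/
import Mathlib

section
/- Let (m_{ij})_{i,j=1}^{n} be nonnegative real numbers satisfying m_{ij} = m_{ji} for all i, j and m_{ii} = 0 for all i. Then there exist points p₁, …, pₙ in ℝ^d with ‖p_i − p_j‖ = m_{ij} for all i, j if and only if the (n−1)×(n−1) matrix B' with entries b'_{ij} = m_{1,i+1}² + m_{1,j+1}² − m_{i+1,j+1}² (for i, j = 1, …, n−1) is positive semidefinite and has rank at most d. -/
open Matrix Finset
open scoped Classical

noncomputable section

/-- `p` realizes the graph `G` as a 2-distance set in `ℝ^d` with distance ratio `k`: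
the larger distance `α₁` occurs exactly between adjacent vertices, the smaller
distance `α₂` between distinct non-adjacent vertices, both distances occur,
and `k = α₁ / α₂`. -/
def IsTwoDistRep (n d : ℕ) (G : SimpleGraph (Fin n)) (k : ℝ)
    (p : Fin n → EuclideanSpace ℝ (Fin d)) : Prop :=
  ∃ α₁ α₂ : ℝ, α₂ < α₁ ∧ 0 < α₂ ∧ k = α₁ / α₂ ∧
    (∀ i j : Fin n, G.Adj i j → dist (p i) (p j) = α₁) ∧
    (∀ i j : Fin n, i ≠ j → ¬ G.Adj i j → dist (p i) (p j) = α₂) ∧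
    (∃ i j : Fin n, G.Adj i j) ∧ (∃ i j : Fin n, i ≠ j ∧ ¬ G.Adj i j)

/-- `G` (a graph on `n` vertices) is representable in `ℝ^d` with ratio `k`. -/
def RepresentableWith (n d : ℕ) (G : SimpleGraph (Fin n)) (k : ℝ) : Prop :=
  ∃ p : Fin n → EuclideanSpace ℝ (Fin d), IsTwoDistRep n d G k p

/-- `G` has a spherical representation in `ℝ^d` with ratio `k`. -/
def SphericalWith (n d : ℕ) (G : SimpleGraph (Fin n)) (k : ℝ) : Prop :=
  ∃ (p : Fin n → EuclideanSpace ℝ (Fin d)) (c : EuclideanSpace ℝ (Fin d)) (r : ℝ),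
    IsTwoDistRep n d G k p ∧ ∀ i, dist (p i) c = r

/-- `G` has a spherical representation in `ℝ^d` (for some ratio). -/
def Spherical (n d : ℕ) (G : SimpleGraph (Fin n)) : Prop :=
  ∃ k : ℝ, SphericalWith n d G k

/-- `G` is a complete multipartite graph: vertices can be classified so that two
vertices are adjacent exactly when they lie in different classes. -/
def IsCompleteMultipartite {n : ℕ} (G : SimpleGraph (Fin n)) : Prop :=
  ∃ f : Fin n → Fin n, ∀ i j : Fin n, G.Adj i j ↔ f i ≠ f j

/-- The matrix `B_G(k)`: zero diagonal, `-k²` at adjacent pairs, `-1` at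
distinct non-adjacent pairs. -/
def BG {n : ℕ} (G : SimpleGraph (Fin n)) [DecidableRel G.Adj] (k : ℝ) :
    Matrix (Fin n) (Fin n) ℝ :=
  Matrix.of fun i j => if i = j then 0 else if G.Adj i j then -k ^ 2 else -1

/-- The all-ones matrix `J`. -/
def Jmat (n : ℕ) : Matrix (Fin n) (Fin n) ℝ := Matrix.of fun _ _ => 1

/-- The orthogonal complement `𝟙^⊥` of the all-ones vector in `ℝ^n`. -/
def onePerp (n : ℕ) : Submodule ℝ (Fin n → ℝ) :=
  LinearMap.ker ((∑ i : Fin n, LinearMap.proj i : (Fin n → ℝ) →ₗ[ℝ] ℝ))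

end

lemma crux {n d : ℕ} (G : Matrix (Fin n) (Fin n) ℝ) (hG : G.PosSemidef) (hr : G.rank ≤ d) :
    ∃ A : Matrix (Fin d) (Fin n) ℝ, ∀ i j, G i j = ∑ k, A k i * A k j := by
  have hH := hG.isHermitian
  set lam := hH.eigenvalues with hlam
  have hlam0 : ∀ l, 0 ≤ lam l := hG.eigenvalues_nonneg
  set U : Matrix (Fin n) (Fin n) ℝ := (hH.eigenvectorUnitary : Matrix (Fin n) (Fin n) ℝ) with hU
  have hspec : ∀ i j, G i j = ∑ l, U i l * lam l * U j l := by
    intro i j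
    conv_lhs => rw [hH.spectral_theorem]
    rw [Unitary.conjStarAlgAut_apply]
    rw [← hU, ← hlam, RCLike.ofReal_real_eq_id, Function.id_comp, Matrix.mul_assoc,
      Matrix.mul_apply]
    apply Finset.sum_congr rfl
    intro l _
    rw [Matrix.diagonal_mul, Matrix.star_apply, star_trivial]
    ring
  have hcard : Fintype.card {l // lam l ≠ 0} ≤ Fintype.card (Fin d) := by
    rw [Fintype.card_fin]
    calc Fintype.card {l // lam l ≠ 0} = G.rank := (hH.rank_eq_card_non_zero_eigs).symm
      _ ≤ d := hr
  obtain ⟨e⟩ := Function.Embedding.nonempty_of_card_le hcard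
  set b : Fin n → Fin n → ℝ := fun l j => Real.sqrt (lam l) * U j l with hb
  have hbz : ∀ l j, lam l = 0 → b l j = 0 := by
    intro l j h; simp [hb, h]
  set A : Matrix (Fin d) (Fin n) ℝ :=
    fun k j => if h : ∃ l : {l // lam l ≠ 0}, e l = k then b h.choose j else 0 with hA
  refine ⟨A, ?_⟩
  intro i j
  have hAe : ∀ (l : {l // lam l ≠ 0}) (j' : Fin n), A (e l) j' = b l j' := by
    intro l j'
    have h : ∃ l' : {l // lam l ≠ 0}, e l' = e l := ⟨l, rfl⟩
    show (if h' : ∃ l' : {l // lam l ≠ 0}, e l' = e l then b h'.choose j' else 0) = b l j'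
    rw [dif_pos h, show h.choose = l from e.injective h.choose_spec]
  have step1 : ∑ k, A k i * A k j
      = ∑ k ∈ Finset.univ.image (fun l : {l // lam l ≠ 0} => e l), A k i * A k j := by
    refine (Finset.sum_subset (Finset.subset_univ _) ?_).symm
    intro k _ hk
    have hne : ¬ ∃ l : {l // lam l ≠ 0}, e l = k := by
      intro ⟨l, hl⟩; exact hk (Finset.mem_image.2 ⟨l, Finset.mem_univ _, hl⟩)
    have : A k i = 0 := by
      show (if h : ∃ l : {l // lam l ≠ 0}, e l = k then b h.choose i else 0) = 0
      rw [dif_neg hne]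
    rw [this, zero_mul]
  have step2 : ∑ k ∈ Finset.univ.image (fun l : {l // lam l ≠ 0} => e l), A k i * A k j
      = ∑ l : {l // lam l ≠ 0}, A (e l) i * A (e l) j := by
    refine Finset.sum_image ?_
    intro x _ y _ h; exact e.injective h
  have step3 : ∑ l : {l // lam l ≠ 0}, b l i * b l j = ∑ l : Fin n, b l i * b l j := by
    rw [show (∑ l : {l // lam l ≠ 0}, b l i * b l j)
        = ∑ l ∈ Finset.univ.filter (fun l => lam l ≠ 0), b l i * b l j from
      (Finset.sum_subtype (Finset.univ.filter (fun l => lam l ≠ 0)) (fun x => by simp)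
        (fun l => b l i * b l j)).symm]
    refine Finset.sum_subset (Finset.filter_subset _ _) ?_
    intro l _ hl
    have : lam l = 0 := by
      by_contra h; exact hl (Finset.mem_filter.2 ⟨Finset.mem_univ _, h⟩)
    rw [hbz _ _ this, zero_mul]
  have step4 : ∀ l, b l i * b l j = U i l * lam l * U j l := by
    intro l
    have h1 : b l i * b l j = (Real.sqrt (lam l) * Real.sqrt (lam l)) * (U i l * U j l) := by
      simp only [hb]; ring
    rw [h1, Real.mul_self_sqrt (hlam0 l)]; ring
  rw [step1, step2]
  simp only [hAe]
  rw [step3, hspec i j]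
  exact (Finset.sum_congr rfl fun l _ => (step4 l).symm)

lemma dist_eq_sqrt_sum {d : ℕ} (x y : EuclideanSpace ℝ (Fin d)) :
    dist x y = Real.sqrt (∑ k, (x k - y k) ^ 2) := by
  rw [EuclideanSpace.dist_eq]
  congr 1
  exact Finset.sum_congr rfl fun k _ => by rw [Real.dist_eq, sq_abs]

/-- **Lemma (Schoenberg).** Given symmetric nonnegative numbers `m i j` with zero
diagonal (indexed by `n+1` points), there exist points `p` in `ℝ^d` with
`dist (p i) (p j) = m i j` iff the `n × n` matrix `B'` with
`B' i j = m 0 i.succ ^ 2 + m 0 j.succ ^ 2 - m i.succ j.succ ^ 2` is positive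
semidefinite of rank at most `d`. -/
theorem stmt2 (n d : ℕ) (m : Fin (n+1) → Fin (n+1) → ℝ)
    (hnn : ∀ i j, 0 ≤ m i j) (hsymm : ∀ i j, m i j = m j i) (hdiag : ∀ i, m i i = 0)
    (B' : Matrix (Fin n) (Fin n) ℝ)
    (hB' : ∀ i j : Fin n,
      B' i j = m 0 i.succ ^ 2 + m 0 j.succ ^ 2 - m i.succ j.succ ^ 2) :
    (∃ p : Fin (n+1) → EuclideanSpace ℝ (Fin d),
        ∀ i j, dist (p i) (p j) = m i j) ↔
      (B'.PosSemidef ∧ B'.rank ≤ d) := by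
  constructor
  · rintro ⟨p, hp⟩
    have hsq : ∀ a b, ∑ k, (p a k - p b k) ^ 2 = m a b ^ 2 := by
      intro a b
      have h1 : Real.sqrt (∑ k, (p a k - p b k) ^ 2) = m a b := by
        rw [← dist_eq_sqrt_sum, hp]
      have h3 : 0 ≤ ∑ k, (p a k - p b k) ^ 2 := Finset.sum_nonneg fun k _ => sq_nonneg _
      rw [← h1, Real.sq_sqrt h3]
    set A : Matrix (Fin d) (Fin n) ℝ :=
      fun k i => Real.sqrt 2 * (p i.succ k - p 0 k) with hAdef
    have key : ∀ i j, B' i j = ∑ k, A k i * A k j := by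
      intro i j
      rw [hB', ← hsq 0 i.succ, ← hsq 0 j.succ, ← hsq i.succ j.succ,
        ← Finset.sum_add_distrib, ← Finset.sum_sub_distrib]
      apply Finset.sum_congr rfl
      intro k _
      have h2 : Real.sqrt 2 * Real.sqrt 2 = 2 := Real.mul_self_sqrt (by norm_num)
      have hAk : A k i * A k j
          = (Real.sqrt 2 * Real.sqrt 2) * ((p i.succ k - p 0 k) * (p j.succ k - p 0 k)) := by
        simp only [hAdef]; ring
      rw [hAk, h2]; ring
    have hmat : B' = Aᴴ * A := by
      ext i j
      rw [Matrix.mul_apply, key]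
      exact Finset.sum_congr rfl fun k _ => by
        rw [Matrix.conjTranspose_apply, star_trivial]
    constructor
    · rw [hmat]; exact Matrix.posSemidef_conjTranspose_mul_self A
    · rw [hmat, Matrix.rank_conjTranspose_mul_self]
      calc A.rank ≤ Fintype.card (Fin d) := Matrix.rank_le_card_height A
        _ = d := Fintype.card_fin d
  · rintro ⟨hpsd, hrank⟩
    obtain ⟨C, hC⟩ := crux B' hpsd hrank
    set q : Fin n → EuclideanSpace ℝ (Fin d) :=
      fun i => (WithLp.equiv 2 (Fin d → ℝ)).symm (fun k => C k i / Real.sqrt 2) with hq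
    set p : Fin (n+1) → EuclideanSpace ℝ (Fin d) := fun a => Fin.cases 0 q a with hpdef
    have hp0 : ∀ k, p 0 k = 0 := fun k => rfl
    have hps : ∀ i k, p i.succ k = C k i / Real.sqrt 2 := fun i k => rfl
    have h2 : Real.sqrt 2 ^ 2 = 2 := Real.sq_sqrt (by norm_num)
    have msq : ∀ a b, ∑ k, (p a k - p b k) ^ 2 = m a b ^ 2 := by
      intro a b
      induction a using Fin.cases with
      | zero =>
        induction b using Fin.cases with
        | zero => simp [hp0, hdiag]
        | succ j =>
          have hterm : ∀ k : Fin d, (p 0 k - p j.succ k) ^ 2 = C k j * C k j / 2 := by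
            intro k
            rw [hp0, hps, zero_sub, neg_sq, div_pow, h2]
            ring
          rw [Finset.sum_congr rfl fun k _ => hterm k, ← Finset.sum_div, ← hC j j,
            hB' j j, hdiag]
          ring
      | succ i =>
        induction b using Fin.cases with
        | zero =>
          have hterm : ∀ k : Fin d, (p i.succ k - p 0 k) ^ 2 = C k i * C k i / 2 := by
            intro k
            rw [hp0, hps, sub_zero, div_pow, h2]
            ring
          rw [Finset.sum_congr rfl fun k _ => hterm k, ← Finset.sum_div, ← hC i i,
            hB' i i, hdiag, hsymm]
          ring
        | succ j =>
          have hterm : ∀ k : Fin d, (p i.succ k - p j.succ k) ^ 2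
              = (C k i * C k i - 2 * (C k i * C k j) + C k j * C k j) / 2 := by
            intro k
            rw [hps, hps, div_sub_div_same, div_pow, h2]
            ring
          rw [Finset.sum_congr rfl fun k _ => hterm k, ← Finset.sum_div,
            Finset.sum_add_distrib, Finset.sum_sub_distrib, ← Finset.mul_sum,
            ← hC i i, ← hC i j, ← hC j j, hB' i i, hB' i j, hB' j j,
            hdiag i.succ, hdiag j.succ]
          ring
    refine ⟨p, fun i j => ?_⟩
    rw [dist_eq_sqrt_sum, msq, Real.sqrt_sq (hnn i j)]
end

section
/- Let G be a graph on d+2 vertices. If G is a complete multipartite graph, then G is not representable in ℝ^d for any ratio k > 1. If G is not a complete multipartite graph, then there exists exactly one real number k > 1 for which G is representable in ℝ^d with ratio k. -/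
open Matrix Finset
open scoped Classical

noncomputable section ESaux
namespace ESaux
open Matrix Finset
open scoped Classical

/-- squared-distance pattern of the graph: `0` on the diagonal, `t` at edges,
`1` at non-edges. -/
def DD {n : ℕ} (G : SimpleGraph (Fin n)) (t : ℝ) (i j : Fin n) : ℝ :=
  if i = j then 0 else if G.Adj i j then t else 1

variable {d : ℕ} (G : SimpleGraph (Fin (d+2)))

/-- reduced Gram-type matrix -/
def MM (G : SimpleGraph (Fin (d+2))) (t : ℝ) : Matrix (Fin (d+1)) (Fin (d+1)) ℝ :=
  Matrix.of fun i j =>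
    (DD G t i.castSucc (Fin.last (d+1)) + DD G t j.castSucc (Fin.last (d+1))
      - DD G t i.castSucc j.castSucc) / 2

lemma DD_symm {n : ℕ} (G : SimpleGraph (Fin n)) (t : ℝ) (i j : Fin n) :
    DD G t i j = DD G t j i := by
  unfold DD
  by_cases h : i = j
  · simp [h]
  · rw [if_neg h, if_neg (Ne.symm h), G.adj_comm]

lemma DD_self {n : ℕ} (G : SimpleGraph (Fin n)) (t : ℝ) (i : Fin n) : DD G t i i = 0 := by
  simp [DD]

lemma DD_affine {n : ℕ} (G : SimpleGraph (Fin n)) (t : ℝ) (i j : Fin n) :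
    DD G t i j = DD G 0 i j + t * (DD G 1 i j - DD G 0 i j) := by
  unfold DD; split_ifs <;> ring

lemma MM_entry_affine (t : ℝ) (i j : Fin (d+1)) :
    MM G t i j = MM G 0 i j + t * (MM G 1 i j - MM G 0 i j) := by
  simp only [MM, Matrix.of_apply]
  rw [DD_affine G t i.castSucc (Fin.last (d+1)), DD_affine G t j.castSucc (Fin.last (d+1)),
    DD_affine G t i.castSucc j.castSucc]
  ring

lemma MM_symm (t : ℝ) (i j : Fin (d+1)) : MM G t i j = MM G t j i := by
  simp only [MM, Matrix.of_apply]
  rw [DD_symm G t i.castSucc j.castSucc]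
  ring

lemma MM_isHermitian (t : ℝ) : (MM G t).IsHermitian := by
  ext i j
  simpa using MM_symm G t j i

lemma qf_eq_sum {m : ℕ} (M : Matrix (Fin m) (Fin m) ℝ) (y : Fin m → ℝ) :
    y ⬝ᵥ M *ᵥ y = ∑ i, ∑ j, y i * y j * M i j := by
  simp only [dotProduct, Matrix.mulVec, Finset.mul_sum]
  exact Finset.sum_congr rfl fun i _ => Finset.sum_congr rfl fun j _ => by ring

lemma qf_affine (t : ℝ) (y : Fin (d+1) → ℝ) :
    y ⬝ᵥ MM G t *ᵥ y
      = y ⬝ᵥ MM G 0 *ᵥ y + t * (y ⬝ᵥ MM G 1 *ᵥ y - y ⬝ᵥ MM G 0 *ᵥ y) := by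
  simp only [qf_eq_sum]
  have h : ∀ i ∈ (univ : Finset (Fin (d+1))), ∀ j ∈ (univ : Finset (Fin (d+1))),
      y i * y j * MM G t i j
        = y i * y j * MM G 0 i j + t * (y i * y j * MM G 1 i j - y i * y j * MM G 0 i j) := by
    intro i _ j _; rw [MM_entry_affine]; ring
  calc ∑ i, ∑ j, y i * y j * MM G t i j
      = ∑ i, ∑ j, (y i * y j * MM G 0 i j
          + t * (y i * y j * MM G 1 i j - y i * y j * MM G 0 i j)) := by
        exact Finset.sum_congr rfl fun i hi => Finset.sum_congr rfl fun j hj => h i hi j hj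
    _ = _ := by
        simp only [Finset.sum_add_distrib, ← Finset.mul_sum, Finset.sum_sub_distrib]

lemma key_reduce (m : ℕ) (A : Fin m → ℝ) (C : Fin m → Fin m → ℝ) (y : Fin m → ℝ) :
    ∑ i, ∑ j, y i * y j * ((A i + A j - C i j)/2)
      = (∑ i, y i) * (∑ i, y i * A i) - (∑ i, ∑ j, y i * y j * C i j)/2 := by
  have h1 : ∀ i : Fin m, ∑ j, y i * y j * ((A i + A j - C i j)/2)
      = (y i * A i * (∑ j, y j) + y i * (∑ j, y j * A j) - ∑ j, y i * y j * C i j)/2 := by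
    intro i
    rw [Finset.mul_sum, Finset.mul_sum, ← Finset.sum_add_distrib, ← Finset.sum_sub_distrib,
      Finset.sum_div]
    exact Finset.sum_congr rfl fun j _ => by ring
  calc ∑ i, ∑ j, y i * y j * ((A i + A j - C i j)/2)
      = ∑ i, (y i * A i * (∑ j, y j) + y i * (∑ j, y j * A j) - ∑ j, y i * y j * C i j)/2 :=
        Finset.sum_congr rfl fun i _ => h1 i
    _ = ((∑ i, y i * A i) * (∑ j, y j) + (∑ i, y i) * (∑ j, y j * A j)
          - ∑ i, ∑ j, y i * y j * C i j)/2 := by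
        rw [← Finset.sum_div]
        congr 1
        rw [Finset.sum_sub_distrib, Finset.sum_add_distrib, ← Finset.sum_mul, ← Finset.sum_mul]
    _ = _ := by ring

lemma key_split (m : ℕ) (D : Fin (m+1) → Fin (m+1) → ℝ)
    (hsym : ∀ i j, D i j = D j i) (hdiag : D (Fin.last m) (Fin.last m) = 0)
    (y : Fin m → ℝ) :
    (∑ i, ∑ j, (Fin.snoc y (-(∑ i, y i)) : Fin (m+1) → ℝ) i
        * (Fin.snoc y (-(∑ i, y i)) : Fin (m+1) → ℝ) j * D i j)
      = (∑ i, ∑ j, y i * y j * D i.castSucc j.castSucc)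
        - 2 * (∑ i, y i) * (∑ i, y i * D i.castSucc (Fin.last m)) := by
  set s := ∑ i, y i with hs
  set x : Fin (m+1) → ℝ := Fin.snoc y (-s) with hx
  have hxc : ∀ i : Fin m, x i.castSucc = y i := fun i => by simp [hx]
  have hxl : x (Fin.last m) = -s := by simp [hx]
  rw [Fin.sum_univ_castSucc (f := fun i => ∑ j, x i * x j * D i j)]
  have inner : ∀ i : Fin (m+1), ∑ j, x i * x j * D i j
      = (∑ j : Fin m, x i * y j * D i j.castSucc) + x i * (-s) * D i (Fin.last m) := by
    intro i
    rw [Fin.sum_univ_castSucc (f := fun j => x i * x j * D i j)]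
    simp [hxc, hxl]
  calc (∑ i : Fin m, ∑ j, x i.castSucc * x j * D i.castSucc j)
        + ∑ j, x (Fin.last m) * x j * D (Fin.last m) j
      = (∑ i : Fin m, ((∑ j : Fin m, y i * y j * D i.castSucc j.castSucc)
          + y i * (-s) * D i.castSucc (Fin.last m)))
        + ((∑ j : Fin m, (-s) * y j * D (Fin.last m) j.castSucc) + (-s) * (-s) * 0) := by
        rw [inner (Fin.last m), hxl, hdiag]
        congr 1
        refine Finset.sum_congr rfl fun i _ => ?_
        rw [inner i.castSucc, hxc]
    _ = _ := by
        rw [Finset.sum_add_distrib]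
        have h2 : ∑ j : Fin m, (-s) * y j * D (Fin.last m) j.castSucc
            = -s * ∑ j : Fin m, y j * D j.castSucc (Fin.last m) := by
          rw [Finset.mul_sum]
          exact Finset.sum_congr rfl fun j _ => by rw [hsym (Fin.last m) j.castSucc]; ring
        rw [h2]
        have h3 : ∑ i : Fin m, y i * (-s) * D i.castSucc (Fin.last m)
            = -s * ∑ i : Fin m, y i * D i.castSucc (Fin.last m) := by
          rw [Finset.mul_sum]
          exact Finset.sum_congr rfl fun j _ => by ring
        rw [h3]
        ring

/-- The key identity relating the reduced quadratic form to the full double sum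
over the snoc-extended vector. -/
lemma qf_snoc (t : ℝ) (y : Fin (d+1) → ℝ) :
    2 * (y ⬝ᵥ MM G t *ᵥ y)
      = -(∑ i, ∑ j, (Fin.snoc y (-(∑ i, y i)) : Fin (d+2) → ℝ) i
          * (Fin.snoc y (-(∑ i, y i)) : Fin (d+2) → ℝ) j * DD G t i j) := by
  rw [qf_eq_sum]
  simp only [MM, Matrix.of_apply]
  rw [key_reduce (d+1) (fun i => DD G t i.castSucc (Fin.last (d+1)))
    (fun i j => DD G t i.castSucc j.castSucc) y]
  rw [key_split (d+1) (DD G t) (DD_symm G t) (DD_self G t (Fin.last (d+1))) y]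
  ring

lemma fiber_sq_eq {m : ℕ} (f : Fin m → Fin m) (x : Fin m → ℝ) :
    ∑ i, ∑ j, (if f i = f j then x i * x j else 0)
      = ∑ c, (∑ i ∈ univ.filter (fun i => f i = c), x i)^2 := by
  have h1 : ∀ c, (∑ i ∈ univ.filter (fun i => f i = c), x i)^2
      = ∑ i, ∑ j, (if f i = c ∧ f j = c then x i * x j else 0) := by
    intro c
    rw [sq, Finset.sum_mul_sum, Finset.sum_filter]
    refine Finset.sum_congr rfl fun i _ => ?_
    by_cases h : f i = c
    · rw [if_pos h, Finset.sum_filter]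
      exact Finset.sum_congr rfl fun j _ => by by_cases h' : f j = c <;> simp [h, h']
    · rw [if_neg h]
      symm; apply Finset.sum_eq_zero; intro j _; simp [h]
  rw [Finset.sum_congr rfl fun c _ => h1 c]
  symm
  rw [Finset.sum_comm]
  refine Finset.sum_congr rfl fun i _ => ?_
  rw [Finset.sum_comm]
  refine Finset.sum_congr rfl fun j _ => ?_
  by_cases hij : f i = f j
  · rw [if_pos hij, Finset.sum_eq_single (f i)]
    · rw [if_pos ⟨rfl, hij.symm⟩]
    · intro c _ hc; rw [if_neg]; rintro ⟨h1', h2'⟩; exact hc h1'.symm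
    · intro h; exact absurd (Finset.mem_univ _) h
  · rw [if_neg hij]
    apply Finset.sum_eq_zero; intro c _
    rw [if_neg]; rintro ⟨h1', h2'⟩; exact hij (h1'.trans h2'.symm)

lemma fiber_sq_nonneg {m : ℕ} (f : Fin m → Fin m) (x : Fin m → ℝ) :
    0 ≤ ∑ i, ∑ j, (if f i = f j then x i * x j else 0) := by
  rw [fiber_sq_eq]
  exact Finset.sum_nonneg fun c _ => sq_nonneg _

lemma CM_DD (f : Fin (d+2) → Fin (d+2)) (hf : ∀ i j, G.Adj i j ↔ f i ≠ f j) (t : ℝ)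
    (i j : Fin (d+2)) :
    DD G t i j = t - (t-1) * (if f i = f j then 1 else 0) - (if i = j then 1 else 0) := by
  unfold DD
  by_cases h : i = j
  · subst h; rw [if_pos rfl, if_pos rfl, if_pos rfl]; ring
  · by_cases ha : G.Adj i j
    · rw [if_neg h, if_pos ha, if_neg ((hf i j).1 ha), if_neg h]; ring
    · have hfe : f i = f j := by by_contra hne; exact ha ((hf i j).2 hne)
      rw [if_neg h, if_neg ha, if_pos hfe, if_neg h]; ring

lemma CM_phi (f : Fin (d+2) → Fin (d+2)) (hf : ∀ i j, G.Adj i j ↔ f i ≠ f j) (t : ℝ)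
    (x : Fin (d+2) → ℝ) :
    ∑ i, ∑ j, x i * x j * DD G t i j
      = t * ((∑ i, x i) * (∑ i, x i))
        - (t-1) * (∑ i, ∑ j, if f i = f j then x i * x j else 0)
        - ∑ i, x i * x i := by
  have hterm : ∀ i j, x i * x j * DD G t i j
      = (t * x i) * x j - (t-1) * (if f i = f j then x i * x j else 0)
        - (if i = j then x i * x i else 0) := by
    intro i j
    rw [CM_DD G f hf t i j]
    by_cases h2 : i = j
    · subst h2; simp; ring
    · rw [if_neg h2, if_neg h2]
      by_cases h1 : f i = f j
      · rw [if_pos h1, if_pos h1]; ring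
      · rw [if_neg h1, if_neg h1]; ring
  calc ∑ i, ∑ j, x i * x j * DD G t i j
      = ∑ i, ((t * x i) * (∑ j, x j)
          - (t-1) * (∑ j, if f i = f j then x i * x j else 0) - x i * x i) := by
        refine Finset.sum_congr rfl fun i _ => ?_
        rw [Finset.sum_congr rfl fun j (_ : j ∈ univ) => hterm i j,
          Finset.sum_sub_distrib, Finset.sum_sub_distrib, ← Finset.mul_sum, ← Finset.mul_sum,
          Finset.sum_ite_eq, if_pos (Finset.mem_univ i)]
    _ = _ := by
        rw [Finset.sum_sub_distrib, Finset.sum_sub_distrib, ← Finset.sum_mul, ← Finset.mul_sum,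
          ← Finset.mul_sum]
        ring

lemma CM_posdef (hCM : ∃ f : Fin (d+2) → Fin (d+2), ∀ i j, G.Adj i j ↔ f i ≠ f j)
    {t : ℝ} (ht : 1 ≤ t) : (MM G t).PosDef := by
  obtain ⟨f, hf⟩ := hCM
  refine Matrix.PosDef.of_dotProduct_mulVec_pos (MM_isHermitian G t) fun y hy => ?_
  have hstar : (star y : Fin (d+1) → ℝ) = y := by simp
  rw [hstar]
  set x : Fin (d+2) → ℝ := Fin.snoc y (-(∑ i, y i)) with hxdef
  have hsum0 : ∑ i, x i = 0 := by
    rw [Fin.sum_univ_castSucc]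
    simp [hxdef]
  have h2 := qf_snoc G t y
  rw [CM_phi G f hf t x, hsum0] at h2
  have hQ : 0 < ∑ i, x i * x i := by
    obtain ⟨i, hi⟩ := Function.ne_iff.1 hy
    have hxi : x i.castSucc ≠ 0 := by simpa [hxdef] using hi
    exact Finset.sum_pos' (fun j _ => mul_self_nonneg _)
      ⟨i.castSucc, Finset.mem_univ _, mul_self_pos.2 hxi⟩
  have hF := fiber_sq_nonneg f x
  have hprod := mul_nonneg (sub_nonneg.2 ht) hF
  nlinarith [h2, hQ, hprod]

lemma qf_one_eq (y : Fin (d+1) → ℝ) :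
    y ⬝ᵥ MM G 1 *ᵥ y = ((∑ i, y i * y i) + (∑ i, y i) * (∑ i, y i)) / 2 := by
  rw [qf_eq_sum]
  have hterm : ∀ i j : Fin (d+1), y i * y j * MM G 1 i j
      = y i * (y j * (1/2)) + (if i = j then y i * y i * (1/2) else 0) := by
    intro i j
    simp only [MM, Matrix.of_apply, DD]
    have h1 : ¬ (i.castSucc = Fin.last (d+1)) := (Fin.castSucc_lt_last i).ne
    have h2 : ¬ (j.castSucc = Fin.last (d+1)) := (Fin.castSucc_lt_last j).ne
    rw [if_neg h1, if_neg h2]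
    by_cases h : i = j
    · subst h
      rw [if_pos rfl, if_pos rfl]
      split_ifs <;> ring
    · have hc : ¬ (i.castSucc = j.castSucc) := fun hh => h (Fin.castSucc_injective _ hh)
      rw [if_neg h, if_neg hc]
      split_ifs <;> ring
  calc ∑ i, ∑ j, y i * y j * MM G 1 i j
      = ∑ i, (y i * ((∑ j, y j) * (1/2)) + y i * y i * (1/2)) := by
        refine Finset.sum_congr rfl fun i _ => ?_
        rw [Finset.sum_congr rfl fun j (_ : j ∈ univ) => hterm i j,
          Finset.sum_add_distrib, Finset.sum_ite_eq, if_pos (Finset.mem_univ i),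
          ← Finset.mul_sum, ← Finset.sum_mul]
    _ = _ := by
        rw [Finset.sum_add_distrib, ← Finset.sum_mul, ← Finset.sum_mul]
        ring

lemma qf_one_ge (y : Fin (d+1) → ℝ) :
    (∑ i, y i * y i) / 2 ≤ y ⬝ᵥ MM G 1 *ᵥ y := by
  rw [qf_one_eq]
  nlinarith [mul_self_nonneg (∑ i, y i)]

lemma Qpos {m : ℕ} {y : Fin m → ℝ} (hy : y ≠ 0) : 0 < ∑ i, y i * y i := by
  obtain ⟨i, hi⟩ := Function.ne_iff.1 hy
  exact Finset.sum_pos' (fun j _ => mul_self_nonneg _)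
    ⟨i, Finset.mem_univ _, mul_self_pos.2 hi⟩

lemma qf_abs_le {m : ℕ} (N : Matrix (Fin m) (Fin m) ℝ) (y : Fin m → ℝ) :
    |y ⬝ᵥ N *ᵥ y| ≤ (∑ i, ∑ j, |N i j|) * (∑ i, y i * y i) := by
  rw [qf_eq_sum]
  have hQ : ∀ i j : Fin m, |y i * y j| ≤ ∑ l, y l * y l := by
    intro i j
    have h1 : y i * y i ≤ ∑ l, y l * y l :=
      Finset.single_le_sum (fun l _ => mul_self_nonneg (y l)) (Finset.mem_univ i)
    have h2 : y j * y j ≤ ∑ l, y l * y l :=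
      Finset.single_le_sum (fun l _ => mul_self_nonneg (y l)) (Finset.mem_univ j)
    have ha := sq_nonneg (y i - y j)
    have hb := sq_nonneg (y i + y j)
    refine abs_le.mpr ⟨by nlinarith, by nlinarith⟩
  calc |∑ i, ∑ j, y i * y j * N i j|
      ≤ ∑ i, |∑ j, y i * y j * N i j| := Finset.abs_sum_le_sum_abs _ _
    _ ≤ ∑ i, ∑ j, |y i * y j * N i j| :=
        Finset.sum_le_sum fun i _ => Finset.abs_sum_le_sum_abs _ _
    _ ≤ ∑ i, ∑ j, |N i j| * (∑ l, y l * y l) := by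
        refine Finset.sum_le_sum fun i _ => Finset.sum_le_sum fun j _ => ?_
        rw [abs_mul, mul_comm (|y i * y j|)]
        exact mul_le_mul_of_nonneg_left (hQ i j) (abs_nonneg _)
    _ = _ := by
        rw [Finset.sum_mul]
        exact Finset.sum_congr rfl fun i _ => by rw [Finset.sum_mul]

lemma qf_smul {m : ℕ} (N : Matrix (Fin m) (Fin m) ℝ) (a : ℝ) (y : Fin m → ℝ) :
    (a • y) ⬝ᵥ N *ᵥ (a • y) = a * a * (y ⬝ᵥ N *ᵥ y) := by
  rw [qf_eq_sum, qf_eq_sum, Finset.mul_sum]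
  refine Finset.sum_congr rfl fun i _ => ?_
  rw [Finset.mul_sum]
  refine Finset.sum_congr rfl fun j _ => ?_
  simp only [Pi.smul_apply, smul_eq_mul]
  ring

lemma Q_smul {m : ℕ} (a : ℝ) (y : Fin m → ℝ) :
    (∑ i, (a • y) i * (a • y) i) = a * a * ∑ i, y i * y i := by
  rw [Finset.mul_sum]
  refine Finset.sum_congr rfl fun i _ => ?_
  simp only [Pi.smul_apply, smul_eq_mul]
  ring

/-- a matrix whose quadratic form is positive definite dominates a positive
multiple of the standard quadratic form -/
lemma posdef_lower {m : ℕ} (hm : 0 < m) (N : Matrix (Fin m) (Fin m) ℝ)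
    (hpd : ∀ y : Fin m → ℝ, y ≠ 0 → 0 < y ⬝ᵥ N *ᵥ y) :
    ∃ c > 0, ∀ y : Fin m → ℝ, c * (∑ i, y i * y i) ≤ y ⬝ᵥ N *ᵥ y := by
  set Q : (Fin m → ℝ) → ℝ := fun y => ∑ i, y i * y i with hQdef
  set f : (Fin m → ℝ) → ℝ := fun y => y ⬝ᵥ N *ᵥ y with hfdef
  have hQcont : Continuous Q :=
    continuous_finset_sum _ fun i _ => (continuous_apply i).mul (continuous_apply i)
  have hfeq : f = fun y => ∑ i, ∑ j, y i * y j * N i j := funext fun y => qf_eq_sum N y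
  have hfcont : Continuous f := by
    rw [hfeq]
    exact continuous_finset_sum _ fun i _ => continuous_finset_sum _ fun j _ =>
      ((continuous_apply i).mul (continuous_apply j)).mul continuous_const
  set s : Set (Fin m → ℝ) := {y | Q y = 1} with hsdef
  have hclosed : IsClosed s := isClosed_eq hQcont continuous_const
  have hbdd : Bornology.IsBounded s := by
    refine (Metric.isBounded_closedBall (x := (0 : Fin m → ℝ)) (r := 1)).subset ?_
    intro y hy
    rw [Metric.mem_closedBall, dist_zero_right]
    rw [pi_norm_le_iff_of_nonneg zero_le_one]
    intro i
    rw [Real.norm_eq_abs, abs_le_one_iff_mul_self_le_one]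
    calc y i * y i ≤ Q y :=
          Finset.single_le_sum (fun l _ => mul_self_nonneg (y l)) (Finset.mem_univ i)
      _ = 1 := hy
  have hne : s.Nonempty := by
    refine ⟨Pi.single ⟨0, hm⟩ 1, ?_⟩
    show Q _ = 1
    rw [hQdef]
    simp only [Pi.single_apply]
    rw [Finset.sum_congr rfl (fun i (_ : i ∈ univ) => by
      by_cases h : i = (⟨0, hm⟩ : Fin m)
      · rw [if_pos h, one_mul]
      · rw [if_neg h, zero_mul] : ∀ i ∈ univ, _ = if i = (⟨0, hm⟩ : Fin m) then (1:ℝ) else 0)]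
    rw [Finset.sum_ite_eq', if_pos (Finset.mem_univ _)]
  obtain ⟨y₀, hy₀s, hmin⟩ :=
    (Metric.isCompact_of_isClosed_isBounded hclosed hbdd).exists_isMinOn hne
      hfcont.continuousOn
  have hy₀ne : y₀ ≠ 0 := by
    intro h
    have : Q y₀ = 1 := hy₀s
    rw [h] at this
    simp [hQdef] at this
  refine ⟨f y₀, hpd y₀ hy₀ne, fun y => ?_⟩
  by_cases hy : y = 0
  · subst hy
    have h1 : Q (0 : Fin m → ℝ) = 0 := by simp [hQdef]
    have h2 : f (0 : Fin m → ℝ) = 0 := by simp [hfdef, dotProduct]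
    show f y₀ * Q 0 ≤ f 0
    rw [h1, h2, mul_zero]
  · have hq : 0 < Q y := Qpos hy
    set r : ℝ := Real.sqrt (Q y) with hrdef
    have hr : 0 < r := Real.sqrt_pos.2 hq
    have hr2 : r * r = Q y := Real.mul_self_sqrt hq.le
    have hus : (r⁻¹ • y) ∈ s := by
      show Q (r⁻¹ • y) = 1
      have : Q (r⁻¹ • y) = r⁻¹ * r⁻¹ * Q y := Q_smul r⁻¹ y
      rw [this, ← hr2]
      field_simp
    have hle : f y₀ ≤ f (r⁻¹ • y) := hmin hus
    have hfu : f (r⁻¹ • y) = r⁻¹ * r⁻¹ * f y := qf_smul N r⁻¹ y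
    rw [hfu] at hle
    have := mul_le_mul_of_nonneg_left hle (mul_pos hr hr).le
    calc f y₀ * Q y = (r * r) * f y₀ := by rw [hr2]; ring
      _ ≤ (r * r) * (r⁻¹ * r⁻¹ * f y) := this
      _ = f y := by field_simp

lemma psd_of_forall (t : ℝ) (h : ∀ y : Fin (d+1) → ℝ, 0 ≤ y ⬝ᵥ MM G t *ᵥ y) :
    (MM G t).PosSemidef :=
  Matrix.PosSemidef.of_dotProduct_mulVec_nonneg (MM_isHermitian G t) fun y => by simpa using h y

lemma psd_qf_nonneg {t : ℝ} (h : (MM G t).PosSemidef) (y : Fin (d+1) → ℝ) :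
    0 ≤ y ⬝ᵥ MM G t *ᵥ y := by
  simpa using h.dotProduct_mulVec_nonneg y

lemma posdef_of_forall (t : ℝ)
    (h : ∀ y : Fin (d+1) → ℝ, y ≠ 0 → 0 < y ⬝ᵥ MM G t *ᵥ y) : (MM G t).PosDef :=
  Matrix.PosDef.of_dotProduct_mulVec_pos (MM_isHermitian G t) fun y hy => by simpa using h y hy

lemma one_posdef : (MM G 1).PosDef :=
  posdef_of_forall G 1 fun y hy =>
    lt_of_lt_of_le (by linarith [Qpos hy]) (qf_one_ge G y)

lemma det_zero_of_null {t : ℝ} (hpsd : (MM G t).PosSemidef) {y : Fin (d+1) → ℝ}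
    (hy : y ≠ 0) (h0 : y ⬝ᵥ MM G t *ᵥ y = 0) : (MM G t).det = 0 := by
  obtain ⟨B, hB⟩ := (by open scoped MatrixOrder in obtain ⟨B, hB⟩ := CStarAlgebra.nonneg_iff_eq_star_mul_self.mp hpsd.nonneg; exact ⟨B, hB⟩ : ∃ B : Matrix (Fin (d+1)) (Fin (d+1)) ℝ, MM G t = Bᴴ * B)
  have hBt : Bᴴ = Bᵀ := Matrix.conjTranspose_eq_transpose_of_trivial B
  rw [hBt] at hB
  have hq : (B *ᵥ y) ⬝ᵥ (B *ᵥ y) = y ⬝ᵥ MM G t *ᵥ y := by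
    rw [hB, ← Matrix.mulVec_mulVec, Matrix.dotProduct_mulVec y, Matrix.vecMul_transpose]
  have hBy : B *ᵥ y = 0 := dotProduct_self_eq_zero.mp (by rw [hq, h0])
  have hMv : (MM G t) *ᵥ y = 0 := by
    rw [hB, ← Matrix.mulVec_mulVec, hBy, Matrix.mulVec_zero]
  exact Matrix.exists_mulVec_eq_zero_iff.mp ⟨y, hy, hMv⟩

lemma bad_qf {a b c : Fin (d+2)} (hab : a ≠ b) (hbc : b ≠ c) (hac : a ≠ c)
    (hnab : ¬G.Adj a b) (hnbc : ¬G.Adj b c) (hAac : G.Adj a c) (t : ℝ) :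
    ∃ y : Fin (d+1) → ℝ, y ≠ 0 ∧ 2 * (y ⬝ᵥ MM G t *ᵥ y) = 8 - 2*t := by
  classical
  set x₀ : Fin (d+2) → ℝ := fun i =>
    (if i = a then 1 else 0) + (if i = c then 1 else 0) - 2*(if i = b then 1 else 0) with hx₀
  have hxa : x₀ a = 1 := by
    simp only [hx₀, if_pos rfl, if_neg hac, if_neg hab]; norm_num
  have hxb : x₀ b = -2 := by
    simp only [hx₀, if_neg (Ne.symm hab), if_neg hbc, if_pos rfl]; norm_num
  have hlin : ∀ f : Fin (d+2) → ℝ, ∑ i, x₀ i * f i = f a + f c - 2 * f b := by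
    intro f
    have hterm : ∀ i : Fin (d+2), x₀ i * f i
        = ((if i = a then f i else 0) + (if i = c then f i else 0))
          - 2 * (if i = b then f i else 0) := by
      intro i
      simp only [hx₀]
      split_ifs <;> ring
    rw [Finset.sum_congr rfl fun i (_ : i ∈ univ) => hterm i,
      Finset.sum_sub_distrib, Finset.sum_add_distrib, ← Finset.mul_sum,
      Finset.sum_ite_eq', Finset.sum_ite_eq', Finset.sum_ite_eq',
      if_pos (Finset.mem_univ a), if_pos (Finset.mem_univ b), if_pos (Finset.mem_univ c)]
  have hsum0 : ∑ i, x₀ i = 0 := by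
    have h := hlin (fun _ => (1:ℝ))
    simp only [mul_one] at h
    rw [h]; norm_num
  set y₀ : Fin (d+1) → ℝ := fun i => x₀ i.castSucc with hy₀
  have hsnoc : (Fin.snoc y₀ (-(∑ i, y₀ i)) : Fin (d+2) → ℝ) = x₀ := by
    have hlast : x₀ (Fin.last (d+1)) = -(∑ i, y₀ i) := by
      have h2 : ∑ i : Fin (d+2), x₀ i
          = (∑ i : Fin (d+1), x₀ i.castSucc) + x₀ (Fin.last (d+1)) :=
        Fin.sum_univ_castSucc x₀
      rw [hsum0] at h2
      have h3 : ∑ i : Fin (d+1), y₀ i = ∑ i : Fin (d+1), x₀ i.castSucc := rfl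
      rw [h3]
      linarith
    funext i
    refine Fin.lastCases ?_ ?_ i
    · rw [Fin.snoc_last, hlast]
    · intro j
      rw [Fin.snoc_castSucc]
  have hDaa : DD G t a a = 0 := DD_self G t a
  have hDbb : DD G t b b = 0 := DD_self G t b
  have hDcc : DD G t c c = 0 := DD_self G t c
  have hDac : DD G t a c = t := by
    simp only [DD]; rw [if_neg hac, if_pos hAac]
  have hDca : DD G t c a = t := by rw [DD_symm]; exact hDac
  have hDab : DD G t a b = 1 := by
    simp only [DD]; rw [if_neg hab, if_neg hnab]
  have hDba : DD G t b a = 1 := by rw [DD_symm]; exact hDab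
  have hDbc : DD G t b c = 1 := by
    simp only [DD]; rw [if_neg hbc, if_neg hnbc]
  have hDcb : DD G t c b = 1 := by rw [DD_symm]; exact hDbc
  have hdouble : ∑ i, ∑ j, x₀ i * x₀ j * DD G t i j = 2*t - 8 := by
    calc ∑ i, ∑ j, x₀ i * x₀ j * DD G t i j
        = ∑ i, x₀ i * (DD G t i a + DD G t i c - 2 * DD G t i b) := by
          refine Finset.sum_congr rfl fun i _ => ?_
          rw [Finset.sum_congr rfl fun j (_ : j ∈ univ) =>
            (show x₀ i * x₀ j * DD G t i j = x₀ j * (x₀ i * DD G t i j) from by ring),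
            hlin (fun j => x₀ i * DD G t i j)]
          ring
      _ = (DD G t a a + DD G t a c - 2 * DD G t a b)
          + (DD G t c a + DD G t c c - 2 * DD G t c b)
          - 2 * (DD G t b a + DD G t b c - 2 * DD G t b b) :=
          hlin (fun i => DD G t i a + DD G t i c - 2 * DD G t i b)
      _ = 2*t - 8 := by
          rw [hDaa, hDbb, hDcc, hDac, hDca, hDab, hDba, hDbc, hDcb]; ring
  have hyne : y₀ ≠ 0 := by
    refine Function.ne_iff.mpr ?_
    by_cases hb : b = Fin.last (d+1)
    · have ha : a ≠ Fin.last (d+1) := fun h => hab (h.trans hb.symm)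
      obtain ⟨a', ha'⟩ := Fin.exists_castSucc_eq.mpr ha
      refine ⟨a', ?_⟩
      show x₀ a'.castSucc ≠ 0
      rw [ha', hxa]
      norm_num
    · obtain ⟨b', hb'⟩ := Fin.exists_castSucc_eq.mpr hb
      refine ⟨b', ?_⟩
      show x₀ b'.castSucc ≠ 0
      rw [hb', hxb]
      norm_num
  refine ⟨y₀, hyne, ?_⟩
  rw [qf_snoc G t y₀, hsnoc, hdouble]
  ring

/-- existence of the critical ratio for a non-complete-multipartite graph -/
lemma exists_crit {a b c : Fin (d+2)} (hab : a ≠ b) (hbc : b ≠ c) (hac : a ≠ c)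
    (hnab : ¬G.Adj a b) (hnbc : ¬G.Adj b c) (hAac : G.Adj a c) :
    ∃ t : ℝ, 1 < t ∧ (MM G t).PosSemidef ∧ (MM G t).det = 0 := by
  classical
  set S : Set ℝ := {t | 1 ≤ t ∧ (MM G t).PosSemidef} with hSdef
  have one_mem : (1:ℝ) ∈ S := by
    refine ⟨le_refl 1, psd_of_forall G 1 fun y => ?_⟩
    have hQ : 0 ≤ ∑ i, y i * y i := Finset.sum_nonneg fun i _ => mul_self_nonneg _
    linarith [qf_one_ge G y]
  have hSne : S.Nonempty := ⟨1, one_mem⟩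
  have hbound : ∀ t ∈ S, t ≤ 4 := by
    rintro t ⟨ht1, hpsd⟩
    obtain ⟨y, hy, hqy⟩ := bad_qf G hab hbc hac hnab hnbc hAac t
    have := psd_qf_nonneg G hpsd y
    linarith
  have hbdd : BddAbove S := ⟨4, hbound⟩
  set T : ℝ := sSup S with hTdef
  have h1le : 1 ≤ T := le_csSup hbdd one_mem
  -- PSD at T
  have hpsdT : ∀ y : Fin (d+1) → ℝ, 0 ≤ y ⬝ᵥ MM G T *ᵥ y := by
    intro y
    set A0 : ℝ := y ⬝ᵥ MM G 0 *ᵥ y with hA0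
    set L : ℝ := y ⬝ᵥ MM G 1 *ᵥ y - A0 with hL
    have hq : ∀ t : ℝ, y ⬝ᵥ MM G t *ᵥ y = A0 + t * L := fun t => qf_affine G t y
    have hq1 : 0 ≤ A0 + 1 * L := by
      rw [← hq 1]
      exact psd_qf_nonneg G one_mem.2 y
    by_cases hLs : 0 ≤ L
    · rw [hq T]
      nlinarith
    · push_neg at hLs
      by_contra hneg
      push_neg at hneg
      rw [hq T] at hneg
      set ε : ℝ := (A0 + T * L) / L with hε
      have hεpos : 0 < ε := div_pos_of_neg_of_neg hneg hLs
      have hεL : ε * L = A0 + T * L := div_mul_cancel₀ _ hLs.ne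
      obtain ⟨t, htS, htgt⟩ := exists_lt_of_lt_csSup hSne
        (show T - ε < T by linarith)
      have hts : t ≤ T := le_csSup hbdd htS
      have hqt : 0 ≤ A0 + t * L := by
        rw [← hq t]; exact psd_qf_nonneg G htS.2 y
      have hp : (t - T) * L < (-ε) * L :=
        mul_lt_mul_of_neg_right (by linarith) hLs
      nlinarith
  -- T is not positive definite
  have hnotpd : ¬ (∀ y : Fin (d+1) → ℝ, y ≠ 0 → 0 < y ⬝ᵥ MM G T *ᵥ y) := by
    intro hpd
    obtain ⟨cc, hcc, hguard⟩ := posdef_lower (Nat.succ_pos d) (MM G T) hpd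
    set Cl : ℝ := ∑ i, ∑ j, |(MM G 1 - MM G 0) i j| with hCl
    have hClnn : 0 ≤ Cl :=
      Finset.sum_nonneg fun i _ => Finset.sum_nonneg fun j _ => abs_nonneg _
    set ε : ℝ := cc / (Cl + 1) with hε
    have hεpos : 0 < ε := div_pos hcc (by linarith)
    have hεeq : ε * (Cl + 1) = cc := div_mul_cancel₀ _ (by linarith)
    have hmem : T + ε ∈ S := by
      refine ⟨by linarith, psd_of_forall G _ fun y => ?_⟩
      set Q : ℝ := ∑ i, y i * y i with hQ
      have hQnn : 0 ≤ Q := Finset.sum_nonneg fun i _ => mul_self_nonneg _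
      set L : ℝ := y ⬝ᵥ MM G 1 *ᵥ y - y ⬝ᵥ MM G 0 *ᵥ y with hLd
      have habs : |L| ≤ Cl * Q := by
        have h1 : y ⬝ᵥ (MM G 1 - MM G 0) *ᵥ y = L := by
          rw [Matrix.sub_mulVec, dotProduct_sub]
        rw [← h1]
        exact qf_abs_le _ y
      have h5 : -(Cl * Q) ≤ L := (abs_le.mp habs).1
      have hqT : cc * Q ≤ y ⬝ᵥ MM G T *ᵥ y := hguard y
      have hqTe : y ⬝ᵥ MM G T *ᵥ y
          = y ⬝ᵥ MM G 0 *ᵥ y + T * L := qf_affine G T y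
      have hqTεe : y ⬝ᵥ MM G (T + ε) *ᵥ y
          = y ⬝ᵥ MM G 0 *ᵥ y + (T + ε) * L := qf_affine G (T + ε) y
      have h6 : ε * (-(Cl * Q)) ≤ ε * L := mul_le_mul_of_nonneg_left h5 hεpos.le
      nlinarith [mul_nonneg hQnn hεpos.le]
    have := le_csSup hbdd hmem
    linarith
  push_neg at hnotpd
  obtain ⟨y, hy, hyle⟩ := hnotpd
  have hy0 : y ⬝ᵥ MM G T *ᵥ y = 0 := le_antisymm hyle (hpsdT y)
  have hpsdT' : (MM G T).PosSemidef := psd_of_forall G T hpsdT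
  have hdet : (MM G T).det = 0 := det_zero_of_null G hpsdT' hy hy0
  have hTne1 : T ≠ 1 := by
    intro h
    rw [h] at hdet
    exact (Matrix.PosDef.det_pos (one_posdef G)).ne' hdet
  exact ⟨T, lt_of_le_of_ne h1le (Ne.symm hTne1), hpsdT', hdet⟩

/-- uniqueness: no strictly larger PSD point once the determinant vanishes -/
lemma crit_lt_absurd {t₁ t₂ : ℝ} (h1 : 1 < t₁) (hlt : t₁ < t₂)
    (hp₂ : (MM G t₂).PosSemidef) (hd₁ : (MM G t₁).det = 0) : False := by
  have hpd : (MM G t₁).PosDef := by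
    refine posdef_of_forall G t₁ fun y hy => ?_
    have hq : ∀ t : ℝ, y ⬝ᵥ MM G t *ᵥ y
        = y ⬝ᵥ MM G 0 *ᵥ y + t * (y ⬝ᵥ MM G 1 *ᵥ y - y ⬝ᵥ MM G 0 *ᵥ y) :=
      fun t => qf_affine G t y
    set L : ℝ := y ⬝ᵥ MM G 1 *ᵥ y - y ⬝ᵥ MM G 0 *ᵥ y with hLd
    have hq1pos : 0 < y ⬝ᵥ MM G 1 *ᵥ y :=
      lt_of_lt_of_le (by linarith [Qpos hy]) (qf_one_ge G y)
    have e1 : y ⬝ᵥ MM G t₁ *ᵥ y = y ⬝ᵥ MM G 1 *ᵥ y + (t₁ - 1) * L := by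
      rw [hq t₁, hq 1]
      ring
    have e2 : y ⬝ᵥ MM G t₂ *ᵥ y = y ⬝ᵥ MM G 1 *ᵥ y + (t₂ - 1) * L := by
      rw [hq t₂, hq 1]
      ring
    have hq2 : 0 ≤ y ⬝ᵥ MM G t₂ *ᵥ y := psd_qf_nonneg G hp₂ y
    by_cases hLs : 0 ≤ L
    · rw [e1]
      nlinarith
    · push_neg at hLs
      have : (t₂ - 1) * L < (t₁ - 1) * L := mul_lt_mul_of_neg_right (by linarith) hLs
      rw [e1]
      rw [e2] at hq2
      linarith
  exact (Matrix.PosDef.det_pos hpd).ne' hd₁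

/-- necessity: a representation with ratio `k` forces `MM G k²` to be PSD singular -/
lemma repr_necess {k : ℝ} (hrep : RepresentableWith (d+2) d G k) :
    (MM G (k^2)).PosSemidef ∧ (MM G (k^2)).det = 0 := by
  classical
  obtain ⟨p, α₁, α₂, hlt, hpos, hkeq, hadj, hnadj, _, _⟩ := hrep
  set t : ℝ := k^2 with htdef
  have hα₂ : α₂ ≠ 0 := hpos.ne'
  have hd2 : ∀ i j : Fin (d+2), dist (p i) (p j)^2 = α₂^2 * DD G t i j := by
    intro i j
    by_cases hij : i = j
    · subst hij
      rw [dist_self, DD_self]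
      ring
    · by_cases ha : G.Adj i j
      · rw [hadj i j ha]
        have hD : DD G t i j = t := by simp only [DD]; rw [if_neg hij, if_pos ha]
        have hα₁ : α₁ = k * α₂ := by rw [hkeq]; field_simp
        rw [hD, hα₁, htdef]; ring
      · rw [hnadj i j hij ha]
        have hD : DD G t i j = 1 := by simp only [DD]; rw [if_neg hij, if_neg ha]
        rw [hD]; ring
  set q : Fin (d+1) → EuclideanSpace ℝ (Fin d) :=
    fun i => p i.castSucc - p (Fin.last (d+1)) with hqdef
  have hinner : ∀ i j : Fin (d+1),
      (inner ℝ (q i) (q j) : ℝ) = α₂^2 * MM G t i j := by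
    intro i j
    have h1 : ‖q i - q j‖^2 = ‖q i‖^2 - 2*(inner ℝ (q i) (q j) : ℝ) + ‖q j‖^2 :=
      norm_sub_sq_real _ _
    have e1 : ‖q i‖ = dist (p i.castSucc) (p (Fin.last (d+1))) := by
      rw [dist_eq_norm]
    have e2 : ‖q j‖ = dist (p j.castSucc) (p (Fin.last (d+1))) := by
      rw [dist_eq_norm]
    have e3 : ‖q i - q j‖ = dist (p i.castSucc) (p j.castSucc) := by
      rw [hqdef]
      rw [sub_sub_sub_cancel_right]
      rw [dist_eq_norm]
    rw [e1, e2, e3] at h1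
    rw [hd2, hd2, hd2] at h1
    have hM : MM G t i j
        = (DD G t i.castSucc (Fin.last (d+1)) + DD G t j.castSucc (Fin.last (d+1))
          - DD G t i.castSucc j.castSucc) / 2 := rfl
    rw [hM]
    linarith
  -- the linear map
  set L : (Fin (d+1) → ℝ) →ₗ[ℝ] EuclideanSpace ℝ (Fin d) :=
    { toFun := fun y => ∑ i, y i • q i
      map_add' := by
        intro u v
        simp only [Pi.add_apply, add_smul]
        rw [Finset.sum_add_distrib]
      map_smul' := by
        intro r u
        simp only [Pi.smul_apply, smul_eq_mul, RingHom.id_apply, Finset.smul_sum, smul_smul] } with hLdef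
  have hLy : ∀ y : Fin (d+1) → ℝ, L y = ∑ i, y i • q i := fun y => rfl
  have hqf : ∀ y : Fin (d+1) → ℝ,
      α₂^2 * (y ⬝ᵥ MM G t *ᵥ y) = (inner ℝ (L y) (L y) : ℝ) := by
    intro y
    rw [hLy, sum_inner, qf_eq_sum, Finset.mul_sum]
    refine Finset.sum_congr rfl fun i _ => ?_
    rw [real_inner_smul_left, inner_sum, Finset.mul_sum, Finset.mul_sum]
    refine Finset.sum_congr rfl fun j _ => ?_
    rw [real_inner_smul_right, hinner]
    ring
  have hpsd : (MM G t).PosSemidef := by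
    refine psd_of_forall G t fun y => ?_
    have h0 : (0:ℝ) ≤ inner ℝ (L y) (L y) := real_inner_self_nonneg
    rw [← hqf y] at h0
    exact nonneg_of_mul_nonneg_right h0 (by positivity)
  -- a kernel vector
  have hnoninj : ¬ Function.Injective L := by
    intro hinj
    have hle := LinearMap.finrank_le_finrank_of_injective hinj
    rw [finrank_euclideanSpace_fin, Module.finrank_fin_fun] at hle
    omega
  obtain ⟨u, v, huv, hne⟩ := Function.not_injective_iff.mp hnoninj
  set y : Fin (d+1) → ℝ := u - v with hydef
  have hyne : y ≠ 0 := sub_ne_zero.mpr hne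
  have hLy0 : L y = 0 := by
    rw [hydef, map_sub, huv, sub_self]
  have hMv : (MM G t) *ᵥ y = 0 := by
    funext i
    have hentry : α₂^2 * ((MM G t *ᵥ y) i) = (inner ℝ (q i) (L y) : ℝ) := by
      rw [hLy, inner_sum]
      show α₂^2 * (∑ j, MM G t i j * y j) = _
      rw [Finset.mul_sum]
      refine Finset.sum_congr rfl fun j _ => ?_
      rw [real_inner_smul_right, hinner]
      ring
    rw [hLy0, inner_zero_right] at hentry
    have := mul_eq_zero.mp hentry
    rcases this with h | h
    · exact absurd h (by positivity)
    · exact h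
  exact ⟨hpsd, Matrix.exists_mulVec_eq_zero_iff.mp ⟨y, hyne, hMv⟩⟩

/-- sufficiency: a PSD singular `MM G t` with `t > 1` yields a representation
with ratio `√t` -/
lemma repr_suff {t : ℝ} (ht : 1 < t) (hpsd : (MM G t).PosSemidef)
    (hdet : (MM G t).det = 0)
    (hedge : ∃ i j : Fin (d+2), G.Adj i j)
    (hnon : ∃ i j : Fin (d+2), i ≠ j ∧ ¬G.Adj i j) :
    RepresentableWith (d+2) d G (Real.sqrt t) := by
  classical
  obtain ⟨B, hB⟩ := (by open scoped MatrixOrder in obtain ⟨B, hB⟩ := CStarAlgebra.nonneg_iff_eq_star_mul_self.mp hpsd.nonneg; exact ⟨B, hB⟩ : ∃ B : Matrix (Fin (d+1)) (Fin (d+1)) ℝ, MM G t = Bᴴ * B)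
  rw [Matrix.conjTranspose_eq_transpose_of_trivial B] at hB
  set avec : Fin (d+1) → EuclideanSpace ℝ (Fin (d+1)) :=
    fun i => (WithLp.equiv 2 (Fin (d+1) → ℝ)).symm (fun r => B r i) with havec
  have havec_apply : ∀ i r, avec i r = B r i := by
    intro i r; simp [havec]
  have hinner0 : ∀ i j : Fin (d+1), (inner ℝ (avec i) (avec j) : ℝ) = MM G t i j := by
    intro i j
    have h1 : (inner ℝ (avec i) (avec j) : ℝ) = ∑ r, avec i r * avec j r := by
      simp [PiLp.inner_apply, RCLike.inner_apply, conj_trivial, mul_comm]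
    rw [h1, hB]
    rw [Matrix.mul_apply]
    exact Finset.sum_congr rfl fun r _ => by
      rw [havec_apply, havec_apply, Matrix.transpose_apply]
  -- kernel vector
  obtain ⟨y, hyne, hMy⟩ := Matrix.exists_mulVec_eq_zero_iff.mpr hdet
  have hBy : B *ᵥ y = 0 := by
    have hq : (B *ᵥ y) ⬝ᵥ (B *ᵥ y) = y ⬝ᵥ MM G t *ᵥ y := by
      rw [hB, ← Matrix.mulVec_mulVec, Matrix.dotProduct_mulVec y, Matrix.vecMul_transpose]
    rw [hMy, dotProduct_zero] at hq
    exact dotProduct_self_eq_zero.mp hq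
  -- the span of the columns
  set L : (Fin (d+1) → ℝ) →ₗ[ℝ] EuclideanSpace ℝ (Fin (d+1)) :=
    { toFun := fun u => ∑ i, u i • avec i
      map_add' := by
        intro u v
        simp only [Pi.add_apply, add_smul]
        rw [Finset.sum_add_distrib]
      map_smul' := by
        intro r u
        simp only [Pi.smul_apply, smul_eq_mul, RingHom.id_apply, Finset.smul_sum, smul_smul] }
    with hLdef
  have hLapply : ∀ u : Fin (d+1) → ℝ, L u = ∑ i, u i • avec i := fun _ => rfl
  have hLsingle : ∀ i, L (Pi.single i 1) = avec i := by
    intro i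
    rw [hLapply, Finset.sum_eq_single i]
    · rw [Pi.single_eq_same, one_smul]
    · intro j _ hj
      rw [Pi.single_eq_of_ne hj, zero_smul]
    · intro h; exact absurd (Finset.mem_univ _) h
  have hLy0 : L y = 0 := by
    rw [hLapply]
    ext r
    rw [WithLp.ofLp_sum, Finset.sum_apply]
    have : ∑ i, (y i • avec i) r = (B *ᵥ y) r := by
      rw [Matrix.mulVec, dotProduct]
      exact Finset.sum_congr rfl fun i _ => by
        rw [PiLp.smul_apply, smul_eq_mul, havec_apply]; ring
    rw [this, hBy, WithLp.ofLp_zero]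
  set W : Submodule ℝ (EuclideanSpace ℝ (Fin (d+1))) := LinearMap.range L with hWdef
  have hmem : ∀ i, avec i ∈ W := fun i => ⟨Pi.single i 1, hLsingle i⟩
  have hWrank : Module.finrank ℝ W ≤ d := by
    show Module.finrank ℝ (LinearMap.range L) ≤ d
    have hrn := LinearMap.finrank_range_add_finrank_ker L
    rw [Module.finrank_fin_fun] at hrn
    have hker : 0 < Module.finrank ℝ (LinearMap.ker L) := by
      rw [Module.finrank_pos_iff]
      refine ⟨⟨⟨y, hLy0⟩, 0, ?_⟩⟩
      intro h
      exact hyne (congrArg Subtype.val h)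
    omega
  set m₀ : ℕ := Module.finrank ℝ W with hm₀def
  have hm₀d : m₀ ≤ d := hWrank
  set bW : OrthonormalBasis (Fin m₀) ℝ W := stdOrthonormalBasis ℝ W with hbWdef
  set T : W → EuclideanSpace ℝ (Fin d) := fun w =>
    (WithLp.equiv 2 (Fin d → ℝ)).symm
      (fun l => if h : (l : ℕ) < m₀ then bW.repr w ⟨(l : ℕ), h⟩ else 0) with hTdef
  have hTapply : ∀ (w : W) (l : Fin d), T w l
      = if h : (l : ℕ) < m₀ then bW.repr w ⟨(l : ℕ), h⟩ else 0 := by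
    intro w l; simp [hTdef]
  have hTinner : ∀ w w' : W, (inner ℝ (T w) (T w') : ℝ) = (inner ℝ w w' : ℝ) := by
    intro w w'
    have h1 : (inner ℝ (T w) (T w') : ℝ) = ∑ l, T w l * T w' l := by
      simp [PiLp.inner_apply, RCLike.inner_apply, conj_trivial]
      exact Finset.sum_congr rfl fun _ _ => mul_comm _ _
    set F : ℕ → ℝ := fun l =>
      if h : l < m₀ then bW.repr w ⟨l, h⟩ * bW.repr w' ⟨l, h⟩ else 0 with hFdef
    have h2 : ∀ l : Fin d, T w l * T w' l = F (l : ℕ) := by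
      intro l
      rw [hTapply, hTapply]
      simp only [hFdef]
      by_cases h : (l : ℕ) < m₀
      · rw [dif_pos h, dif_pos h, dif_pos h]
      · rw [dif_neg h, dif_neg h, dif_neg h, mul_zero]
    rw [h1, Finset.sum_congr rfl fun l _ => h2 l]
    rw [Fin.sum_univ_eq_sum_range F d]
    rw [← Finset.sum_subset (Finset.range_subset_range.mpr hm₀d)
      (fun x _ hx => by
        simp only [hFdef]
        rw [dif_neg (by simpa using hx)])]
    rw [← Fin.sum_univ_eq_sum_range F m₀]
    have h3 : ∑ i : Fin m₀, F (i : ℕ) = ∑ i : Fin m₀, bW.repr w i * bW.repr w' i := by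
      refine Finset.sum_congr rfl fun i _ => ?_
      simp only [hFdef]
      rw [dif_pos i.isLt]
    rw [h3]
    have h4 : (inner ℝ (bW.repr w) (bW.repr w') : ℝ) = inner ℝ w w' :=
      bW.repr.inner_map_map w w'
    have h5 : (inner ℝ (bW.repr w) (bW.repr w') : ℝ)
        = ∑ i : Fin m₀, bW.repr w i * bW.repr w' i := by
      rw [PiLp.inner_apply]
      exact Finset.sum_congr rfl fun i _ => by
        rw [RCLike.inner_apply, starRingEnd_apply, star_trivial, mul_comm]
    rw [← h5]
    exact h4
  -- the points
  set u : Fin (d+1) → W := fun i => ⟨avec i, hmem i⟩ with hudef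
  set p : Fin (d+2) → EuclideanSpace ℝ (Fin d) := Fin.snoc (fun i => T (u i)) 0 with hpdef
  have hpcs : ∀ i : Fin (d+1), p i.castSucc = T (u i) := by
    intro i; rw [hpdef, Fin.snoc_castSucc]
  have hplast : p (Fin.last (d+1)) = 0 := by rw [hpdef, Fin.snoc_last]
  have hip : ∀ i j : Fin (d+1), (inner ℝ (p i.castSucc) (p j.castSucc) : ℝ) = MM G t i j := by
    intro i j
    rw [hpcs, hpcs, hTinner]
    have : (inner ℝ (u i) (u j) : ℝ) = inner ℝ (avec i) (avec j) := rfl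
    rw [this, hinner0]
  have hnormsq : ∀ i : Fin (d+1), ‖p i.castSucc‖^2 = MM G t i i := by
    intro i
    rw [← real_inner_self_eq_norm_sq]
    exact hip i i
  have hMMentry : ∀ i j : Fin (d+1), MM G t i j
      = (DD G t i.castSucc (Fin.last (d+1)) + DD G t j.castSucc (Fin.last (d+1))
        - DD G t i.castSucc j.castSucc) / 2 := fun i j => rfl
  have hMM_diag : ∀ i : Fin (d+1), MM G t i i = DD G t i.castSucc (Fin.last (d+1)) := by
    intro i
    rw [hMMentry, DD_self]
    ring
  have hdist2 : ∀ i j : Fin (d+2), dist (p i) (p j)^2 = DD G t i j := by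
    intro i j
    refine Fin.lastCases ?_ ?_ i
    · refine Fin.lastCases ?_ ?_ j
      · rw [dist_self, DD_self]
        ring
      · intro j'
        rw [dist_comm, hplast, dist_zero_right, hnormsq, hMM_diag,
          DD_symm G t j'.castSucc (Fin.last (d+1))]
    · intro i'
      refine Fin.lastCases ?_ ?_ j
      · rw [hplast, dist_zero_right, hnormsq, hMM_diag]
      · intro j'
        have hx : dist (p i'.castSucc) (p j'.castSucc)^2
            = ‖p i'.castSucc‖^2 - 2*(inner ℝ (p i'.castSucc) (p j'.castSucc) : ℝ)
              + ‖p j'.castSucc‖^2 := by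
          rw [dist_eq_norm, norm_sub_sq_real]
        rw [hx, hnormsq i', hnormsq j', hip i' j', hMM_diag i', hMM_diag j', hMMentry i' j']
        ring
  have hadj : ∀ i j : Fin (d+2), G.Adj i j → dist (p i) (p j) = Real.sqrt t := by
    intro i j ha
    have h2 : dist (p i) (p j)^2 = t := by
      rw [hdist2]
      simp only [DD]
      rw [if_neg ha.ne, if_pos ha]
    rw [← Real.sqrt_sq (dist_nonneg (x := p i) (y := p j)), h2]
  have hnadj : ∀ i j : Fin (d+2), i ≠ j → ¬G.Adj i j → dist (p i) (p j) = 1 := by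
    intro i j hij ha
    have h2 : dist (p i) (p j)^2 = 1 := by
      rw [hdist2]
      simp only [DD]
      rw [if_neg hij, if_neg ha]
    rw [← Real.sqrt_sq (dist_nonneg (x := p i) (y := p j)), h2, Real.sqrt_one]
  refine ⟨p, Real.sqrt t, 1, ?_, one_pos, (div_one _).symm, hadj, hnadj, hedge, hnon⟩
  rw [show (1:ℝ) = Real.sqrt 1 from Real.sqrt_one.symm]
  exact Real.sqrt_lt_sqrt zero_le_one ht

/-- a graph that is not complete multipartite contains an induced path
on three vertices in its complement -/
lemma not_CM_triple
    (h : ¬ (∃ f : Fin (d+2) → Fin (d+2), ∀ i j, G.Adj i j ↔ f i ≠ f j)) :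
    ∃ a b c : Fin (d+2),
      a ≠ b ∧ b ≠ c ∧ a ≠ c ∧ ¬G.Adj a b ∧ ¬G.Adj b c ∧ G.Adj a c := by
  classical
  by_contra hno
  push_neg at hno
  apply h
  set R : Fin (d+2) → Fin (d+2) → Prop := fun i j => i = j ∨ ¬G.Adj i j with hR
  have hRrefl : ∀ i, R i i := fun i => Or.inl rfl
  have hRsymm : ∀ i j, R i j → R j i := by
    rintro i j (rfl | hn)
    · exact Or.inl rfl
    · exact Or.inr fun ha => hn ha.symm
  have hRtrans : ∀ i j k, R i j → R j k → R i k := by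
    intro i j k h1 h2
    by_cases hij : i = j
    · subst hij; exact h2
    by_cases hjk : j = k
    · subst hjk; exact h1
    by_cases hik : i = k
    · exact Or.inl hik
    have hnij : ¬G.Adj i j := h1.resolve_left hij
    have hnjk : ¬G.Adj j k := h2.resolve_left hjk
    exact Or.inr (hno i j k hij hjk hik hnij hnjk)
  have hne : ∀ i : Fin (d+2), (univ.filter (fun j => R i j)).Nonempty :=
    fun i => ⟨i, Finset.mem_filter.mpr ⟨Finset.mem_univ i, hRrefl i⟩⟩
  set f : Fin (d+2) → Fin (d+2) :=
    fun i => (univ.filter (fun j => R i j)).min' (hne i) with hf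
  have hfR : ∀ i, R i (f i) := by
    intro i
    have := Finset.min'_mem (univ.filter (fun j => R i j)) (hne i)
    exact (Finset.mem_filter.mp this).2
  have hfeq : ∀ i j, R i j → f i = f j := by
    intro i j hij
    have hset : univ.filter (fun x => R i x) = univ.filter (fun x => R j x) := by
      ext x
      simp only [Finset.mem_filter, Finset.mem_univ, true_and]
      exact ⟨fun h' => hRtrans _ _ _ (hRsymm _ _ hij) h', fun h' => hRtrans _ _ _ hij h'⟩
    apply le_antisymm
    · apply Finset.min'_le
      rw [hset]
      exact Finset.min'_mem _ _
    · apply Finset.min'_le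
      rw [← hset]
      exact Finset.min'_mem _ _
  refine ⟨f, fun i j => ⟨?_, ?_⟩⟩
  · intro ha hfij
    have hRij : R i j :=
      hRtrans _ _ _ (hfR i) (hRsymm _ _ (hfij ▸ hfR j))
    rcases hRij with rfl | hn
    · exact G.loopless.irrefl i ha
    · exact hn ha
  · intro hfij
    by_contra hna
    exact hfij (hfeq i j (Or.inr hna))

end ESaux
end ESaux

/-- **Theorem (Einhorn–Schoenberg).** A complete multipartite graph on `d+2`
vertices is not representable in `ℝ^d` for any ratio `k > 1`; a graph on `d+2`
vertices that is not complete multipartite is representable in `ℝ^d` for exactly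
one ratio `k > 1`. -/
theorem stmt3 (d : ℕ) (G : SimpleGraph (Fin (d+2))) :
    (IsCompleteMultipartite G → ∀ k : ℝ, 1 < k → ¬ RepresentableWith (d+2) d G k) ∧
    (¬ IsCompleteMultipartite G →
      ∃! k : ℝ, 1 < k ∧ RepresentableWith (d+2) d G k) := by
  constructor
  · intro hCM k hk hrep
    obtain ⟨hpsd, hdet⟩ := ESaux.repr_necess G hrep
    have hpd : (ESaux.MM G (k^2)).PosDef := ESaux.CM_posdef G hCM (by nlinarith)
    exact (Matrix.PosDef.det_pos hpd).ne' hdet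
  · intro hnCM
    obtain ⟨a, b, c, hab, hbc, hac, hnab, hnbc, hAac⟩ := ESaux.not_CM_triple G hnCM
    obtain ⟨T, hT1, hTpsd, hTdet⟩ := ESaux.exists_crit G hab hbc hac hnab hnbc hAac
    have hedge : ∃ i j : Fin (d+2), G.Adj i j := ⟨a, c, hAac⟩
    have hnon : ∃ i j : Fin (d+2), i ≠ j ∧ ¬G.Adj i j := ⟨a, b, hab, hnab⟩
    have hrep := ESaux.repr_suff G hT1 hTpsd hTdet hedge hnon
    have hsq1 : 1 < Real.sqrt T := by
      rw [show (1:ℝ) = Real.sqrt 1 from Real.sqrt_one.symm]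
      exact Real.sqrt_lt_sqrt zero_le_one hT1
    refine ⟨Real.sqrt T, ⟨hsq1, hrep⟩, ?_⟩
    rintro k ⟨hk1, hkrep⟩
    obtain ⟨hpsd', hdet'⟩ := ESaux.repr_necess G hkrep
    have hk2 : k^2 = T := by
      by_contra hne2
      rcases lt_or_gt_of_ne hne2 with hlt | hgt
      · exact ESaux.crit_lt_absurd G (by nlinarith) hlt hTpsd hdet'
      · exact ESaux.crit_lt_absurd G hT1 hgt hpsd' hTdet
    rw [← hk2, Real.sqrt_sq (by linarith : (0:ℝ) ≤ k)]
end

section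
/- Let G be a graph on d+2 vertices and let k > 1. Then G is representable in ℝ^d with ratio k if and only if both of the following hold: (1) wᵀ·B_G(k)·w ≥ 0 for every vector w ∈ 𝟙^⊥; (2) there exists a nonzero vector w ∈ 𝟙^⊥ and a real number γ such that B_G(k)·w = γ·𝟙. -/
open Matrix Finset
open scoped Classical

open scoped RealInnerProductSpace

section Stmt4Aux

lemma quad_id {n dd : ℕ} (q : Fin n → EuclideanSpace ℝ (Fin dd)) (w : Fin n → ℝ)
    (hw : ∑ i, w i = 0) :
    ∑ i, ∑ j, w i * w j * ‖q i - q j‖^2 = -(2 * ‖∑ i, w i • q i‖^2) := by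
  have hinner : ⟪∑ i, w i • q i, ∑ j, w j • q j⟫ = ∑ i, ∑ j, w i * w j * ⟪q i, q j⟫ := by
    rw [sum_inner]
    refine Finset.sum_congr rfl fun i _ => ?_
    rw [inner_sum]
    refine Finset.sum_congr rfl fun j _ => ?_
    rw [real_inner_smul_left, real_inner_smul_right]; ring
  have h1 : ∑ i, ∑ j, (w i * w j * ‖q i‖^2) = 0 := by
    calc ∑ i, ∑ j, (w i * w j * ‖q i‖^2) = ∑ i, (w i * ‖q i‖^2) * ∑ j, w j := by
          refine Finset.sum_congr rfl fun i _ => ?_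
          rw [Finset.mul_sum]
          exact Finset.sum_congr rfl fun j _ => by ring
      _ = 0 := by rw [hw]; simp
  have h2 : ∑ i, ∑ j, (w i * w j * ‖q j‖^2) = 0 := by
    calc ∑ i, ∑ j, (w i * w j * ‖q j‖^2) = ∑ i, w i * ∑ j, (w j * ‖q j‖^2) := by
          refine Finset.sum_congr rfl fun i _ => ?_
          rw [Finset.mul_sum]
          exact Finset.sum_congr rfl fun j _ => by ring
      _ = (∑ i, w i) * ∑ j, (w j * ‖q j‖^2) := by rw [Finset.sum_mul]
      _ = 0 := by rw [hw]; ring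
  have key : ∀ i j : Fin n, w i * w j * ‖q i - q j‖^2
      = (w i * w j * ‖q i‖^2) + (w i * w j * ‖q j‖^2) - 2 * (w i * w j * ⟪q i, q j⟫) := by
    intro i j; rw [norm_sub_sq_real]; ring
  calc ∑ i, ∑ j, w i * w j * ‖q i - q j‖^2
      = ∑ i, ∑ j, ((w i * w j * ‖q i‖^2) + (w i * w j * ‖q j‖^2) - 2 * (w i * w j * ⟪q i, q j⟫)) := by
        exact Finset.sum_congr rfl fun i _ => Finset.sum_congr rfl fun j _ => key i j
    _ = (∑ i, ∑ j, (w i * w j * ‖q i‖^2)) + (∑ i, ∑ j, (w i * w j * ‖q j‖^2))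
        - 2 * (∑ i, ∑ j, w i * w j * ⟪q i, q j⟫) := by
        simp [Finset.sum_add_distrib, Finset.sum_sub_distrib, Finset.mul_sum]
    _ = -(2 * ‖∑ i, w i • q i‖^2) := by
        rw [h1, h2, ← hinner, real_inner_self_eq_norm_sq]; ring

section A1
variable {n : ℕ} (G : SimpleGraph (Fin n)) [DecidableRel G.Adj] (k : ℝ)

lemma BG_apply (i j : Fin n) :
    BG G k i j = if i = j then 0 else if G.Adj i j then -k ^ 2 else -1 := rfl

lemma BG_diag (i : Fin n) : BG G k i i = 0 := by simp [BG_apply]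

lemma BG_symm (i j : Fin n) : BG G k i j = BG G k j i := by
  simp only [BG_apply]
  by_cases h : i = j
  · simp [h]
  · rw [if_neg h, if_neg (Ne.symm h)]
    by_cases ha : G.Adj i j
    · rw [if_pos ha, if_pos (G.adj_symm ha)]
    · rw [if_neg ha, if_neg (fun hb => ha (G.adj_symm hb))]

lemma dot_expand (B : Matrix (Fin n) (Fin n) ℝ) (w : Fin n → ℝ) :
    w ⬝ᵥ B.mulVec w = ∑ i, ∑ j, w i * w j * B i j := by
  simp only [dotProduct, Matrix.mulVec, Finset.mul_sum]
  exact Finset.sum_congr rfl fun i _ => Finset.sum_congr rfl fun j _ => by ring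

lemma mulVec_entry (B : Matrix (Fin n) (Fin n) ℝ) (w : Fin n → ℝ) (i : Fin n) :
    B.mulVec w i = ∑ j, B i j * w j := rfl

lemma row_id {dd : ℕ} (q : Fin n → EuclideanSpace ℝ (Fin dd)) (w : Fin n → ℝ)
    (hw : ∑ i, w i = 0) (hS : ∑ i, w i • q i = 0) (i : Fin n) :
    ∑ j, w j * ‖q i - q j‖^2 = ∑ j, w j * ‖q j‖^2 := by
  have h1 : ∑ j, w j * ⟪q i, q j⟫ = 0 := by
    have h2 : ⟪q i, ∑ j, w j • q j⟫ = ∑ j, w j * ⟪q i, q j⟫ := by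
      rw [inner_sum]
      exact Finset.sum_congr rfl fun j _ => by rw [real_inner_smul_right]
    rw [← h2, hS, inner_zero_right]
  calc ∑ j, w j * ‖q i - q j‖^2
      = ∑ j, (w j * ‖q i‖^2 - 2 * (w j * ⟪q i, q j⟫) + w j * ‖q j‖^2) := by
        refine Finset.sum_congr rfl fun j _ => ?_
        rw [norm_sub_sq_real]; ring
    _ = (∑ j, w j) * ‖q i‖^2 - 2 * (∑ j, w j * ⟪q i, q j⟫) + ∑ j, w j * ‖q j‖^2 := by
        rw [Finset.sum_add_distrib, Finset.sum_sub_distrib, ← Finset.sum_mul, ← Finset.mul_sum]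
    _ = ∑ j, w j * ‖q j‖^2 := by rw [hw, h1]; ring
end A1

lemma double_sum_snoc {n : ℕ} (f : Fin (n+1) → Fin (n+1) → ℝ)
    (hsym : ∀ i j, f i j = f j i) (hdiag : ∀ i, f i i = 0) (x : Fin n → ℝ) :
    (Fin.snoc x (-(∑ a, x a)) : Fin (n+1) → ℝ) ⬝ᵥ
      (Matrix.of f).mulVec (Fin.snoc x (-(∑ a, x a))) =
    ∑ a, ∑ b, x a * x b *
      (f a.castSucc b.castSucc - f a.castSucc (Fin.last n) - f b.castSucc (Fin.last n)) := by
  set s := ∑ a, x a with hs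
  set w : Fin (n+1) → ℝ := Fin.snoc x (-s) with hw
  have hwc : ∀ a : Fin n, w a.castSucc = x a := fun a => Fin.snoc_castSucc _ _ _
  have hwl : w (Fin.last n) = -s := Fin.snoc_last _ _
  set C : Fin n → ℝ := fun a => f a.castSucc (Fin.last n) with hC
  set T : ℝ := ∑ a : Fin n, ∑ b : Fin n, x a * x b * f a.castSucc b.castSucc with hT
  set P : ℝ := ∑ a : Fin n, x a * C a with hP
  have expand : w ⬝ᵥ (Matrix.of f).mulVec w = ∑ i, ∑ j, w i * w j * f i j := by
    simp only [dotProduct, Matrix.mulVec, Finset.mul_sum, Matrix.of_apply]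
    exact Finset.sum_congr rfl fun i _ => Finset.sum_congr rfl fun j _ => by ring
  have inner_split : ∀ i : Fin (n+1), ∑ j, w i * w j * f i j =
      (∑ b, w i * x b * f i b.castSucc) + w i * (-s) * f i (Fin.last n) := by
    intro i
    rw [Fin.sum_univ_castSucc (f := fun j => w i * w j * f i j)]
    simp [hwc, hwl]
  have hL : w ⬝ᵥ (Matrix.of f).mulVec w = T - s * P - s * P := by
    rw [expand, Fin.sum_univ_castSucc (f := fun i => ∑ j, w i * w j * f i j)]
    rw [inner_split (Fin.last n)]
    have e1 : ∑ a : Fin n, ∑ j, w a.castSucc * w j * f a.castSucc j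
        = ∑ a : Fin n, ((∑ b, x a * x b * f a.castSucc b.castSucc) + x a * (-s) * C a) := by
      refine Finset.sum_congr rfl fun a _ => ?_
      rw [inner_split a.castSucc, hwc]
    rw [e1, Finset.sum_add_distrib]
    have e2 : ∑ a : Fin n, x a * (-s) * C a = -s * P := by
      rw [hP, Finset.mul_sum]
      exact Finset.sum_congr rfl fun a _ => by ring
    have e3 : ∑ b : Fin n, w (Fin.last n) * x b * f (Fin.last n) b.castSucc = -s * P := by
      rw [hP, Finset.mul_sum]
      refine Finset.sum_congr rfl fun b _ => ?_
      rw [hwl, hsym (Fin.last n) b.castSucc]; ring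
    rw [e2, e3, hwl, hdiag]
    ring
  have hR : ∑ a, ∑ b, x a * x b * (f a.castSucc b.castSucc - C a - C b)
      = T - s * P - s * P := by
    have e4 : ∀ a b : Fin n, x a * x b * (f a.castSucc b.castSucc - C a - C b)
        = x a * x b * f a.castSucc b.castSucc - x a * x b * C a - x a * x b * C b := by
      intro a b; ring
    simp only [e4, Finset.sum_sub_distrib]
    have e5 : ∑ a : Fin n, ∑ b : Fin n, x a * x b * C a = s * P := by
      rw [hP, Finset.mul_sum]
      refine Finset.sum_congr rfl fun a _ => ?_
      rw [hs, Finset.sum_mul]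
      exact Finset.sum_congr rfl fun b _ => by ring
    have e6 : ∑ a : Fin n, ∑ b : Fin n, x a * x b * C b = s * P := by
      calc ∑ a : Fin n, ∑ b : Fin n, x a * x b * C b = ∑ a : Fin n, x a * P := by
            refine Finset.sum_congr rfl fun a _ => ?_
            rw [hP, Finset.mul_sum]
            exact Finset.sum_congr rfl fun b _ => by ring
        _ = s * P := by rw [← Finset.sum_mul, ← hs]
    rw [e5, e6, ← hT]
  rw [hL, ← hR]

noncomputable def Mmat (d : ℕ) (G : SimpleGraph (Fin (d+2))) [DecidableRel G.Adj] (k : ℝ) :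
    Matrix (Fin (d+1)) (Fin (d+1)) ℝ :=
  Matrix.of fun a b =>
    (BG G k a.castSucc b.castSucc - BG G k a.castSucc (Fin.last (d+1))
      - BG G k b.castSucc (Fin.last (d+1))) / 2

section A2
variable (d : ℕ) (G : SimpleGraph (Fin (d+2))) [DecidableRel G.Adj] (k : ℝ)
lemma Mmat_apply (a b : Fin (d+1)) : Mmat d G k a b =
    (BG G k a.castSucc b.castSucc - BG G k a.castSucc (Fin.last (d+1))
      - BG G k b.castSucc (Fin.last (d+1))) / 2 := rfl

lemma stepA (x : Fin (d+1) → ℝ) :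
    (Fin.snoc x (-(∑ a, x a)) : Fin (d+2) → ℝ) ⬝ᵥ
      (BG G k).mulVec (Fin.snoc x (-(∑ a, x a))) =
    2 * (x ⬝ᵥ (Mmat d G k).mulVec x) := by
  have h := double_sum_snoc (fun i j => BG G k i j) (BG_symm G k) (BG_diag G k) x
  calc (Fin.snoc x (-(∑ a, x a)) : Fin (d+2) → ℝ) ⬝ᵥ
      (BG G k).mulVec (Fin.snoc x (-(∑ a, x a)))
      = ∑ a, ∑ b, x a * x b *
        (BG G k a.castSucc b.castSucc - BG G k a.castSucc (Fin.last (d+1))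
          - BG G k b.castSucc (Fin.last (d+1))) := h
    _ = 2 * (x ⬝ᵥ (Mmat d G k).mulVec x) := by
        rw [dot_expand, Finset.mul_sum]
        refine Finset.sum_congr rfl fun a _ => ?_
        rw [Finset.mul_sum]
        refine Finset.sum_congr rfl fun b _ => ?_
        rw [Mmat_apply]; ring

lemma stepB (w : Fin (d+2) → ℝ) (hw0 : w ≠ 0) (hw1 : ∑ i, w i = 0)
    (γ : ℝ) (hγ : (BG G k).mulVec w = fun _ => γ) :
    (fun a : Fin (d+1) => w a.castSucc) ≠ 0 ∧
    (Mmat d G k).mulVec (fun a => w a.castSucc) = 0 := by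
  set x : Fin (d+1) → ℝ := fun a => w a.castSucc with hx
  have hrow : ∀ i, ∑ j, BG G k i j * w j = γ := by
    intro i
    have := congrFun hγ i
    rw [mulVec_entry] at this
    exact this
  have hsum : ∑ a, x a = - w (Fin.last (d+1)) := by
    have := Fin.sum_univ_castSucc (f := w)
    rw [this] at hw1
    linarith
  constructor
  · intro hx0
    apply hw0
    have hlast : w (Fin.last (d+1)) = 0 := by
      have : ∑ a, x a = 0 := by rw [hx0]; simp
      rw [this] at hsum; linarith
    funext i
    induction i using Fin.lastCases with
    | last => simpa using hlast
    | cast a =>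
        have : x a = 0 := by rw [hx0]; rfl
        simpa using this
  · funext a
    rw [mulVec_entry]
    have e1 : ∑ b, BG G k a.castSucc b.castSucc * x b
        = γ - BG G k a.castSucc (Fin.last (d+1)) * w (Fin.last (d+1)) := by
      have := hrow a.castSucc
      rw [Fin.sum_univ_castSucc (f := fun j => BG G k a.castSucc j * w j)] at this
      linarith
    have e2 : ∑ b, BG G k b.castSucc (Fin.last (d+1)) * x b = γ := by
      have := hrow (Fin.last (d+1))
      rw [Fin.sum_univ_castSucc (f := fun j => BG G k (Fin.last (d+1)) j * w j)] at this
      rw [BG_diag] at this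
      calc ∑ b : Fin (d+1), BG G k b.castSucc (Fin.last (d+1)) * x b
          = ∑ b : Fin (d+1), BG G k (Fin.last (d+1)) b.castSucc * w b.castSucc :=
            Finset.sum_congr rfl fun b _ => by rw [BG_symm]
        _ = γ := by linarith
    calc ∑ b, Mmat d G k a b * x b
        = ∑ b, ((BG G k a.castSucc b.castSucc * x b
            - BG G k a.castSucc (Fin.last (d+1)) * x b
            - BG G k b.castSucc (Fin.last (d+1)) * x b) / 2) := by
          refine Finset.sum_congr rfl fun b _ => ?_
          rw [Mmat_apply]; ring
      _ = ((γ - BG G k a.castSucc (Fin.last (d+1)) * w (Fin.last (d+1)))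
            - BG G k a.castSucc (Fin.last (d+1)) * (∑ b, x b) - γ) / 2 := by
          rw [← Finset.sum_div, Finset.sum_sub_distrib, Finset.sum_sub_distrib,
            ← Finset.mul_sum, e1, e2]

      _ = 0 := by rw [hsum]; ring
end A2

lemma exists_edges {n : ℕ} (hn : 0 < n) (G : SimpleGraph (Fin n)) [DecidableRel G.Adj]
    (k : ℝ) (hk : 1 < k) (w : Fin n → ℝ) (hw0 : w ≠ 0) (hw1 : ∑ i, w i = 0)
    (γ : ℝ) (hγ : (BG G k).mulVec w = fun _ => γ) :
    (∃ i j : Fin n, G.Adj i j) ∧ (∃ i j : Fin n, i ≠ j ∧ ¬ G.Adj i j) := by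
  have hk0 : (0:ℝ) < k := lt_trans one_pos hk
  have hrow : ∀ i, ∑ j, BG G k i j * w j = γ := fun i => by
    have := congrFun hγ i; rw [mulVec_entry] at this; exact this
  constructor
  · by_contra hcon
    push_neg at hcon
    -- no edges: B i j = -1 off diagonal
    have hwi : ∀ i, w i = γ := by
      intro i
      have h0 := hrow i
      have : ∀ j, BG G k i j * w j = -(w j) + (if i = j then w j else 0) := by
        intro j
        rw [BG_apply]
        by_cases hij : i = j
        · simp [hij]
        · rw [if_neg hij, if_neg (hcon i j), if_neg hij]; ring
      rw [Finset.sum_congr rfl fun j _ => this j] at h0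
      rw [Finset.sum_add_distrib, Finset.sum_neg_distrib, hw1, Finset.sum_ite_eq] at h0
      simpa using h0
    have hγ0 : γ = 0 := by
      have : ∑ i, w i = n * γ := by
        rw [Finset.sum_congr rfl fun i _ => hwi i]
        simp [Finset.card_univ]
      rw [hw1] at this
      have hn' : (n:ℝ) ≠ 0 := Nat.cast_ne_zero.mpr hn.ne'
      exact by
        rcases mul_eq_zero.mp this.symm with h | h
        · exact absurd h hn'
        · exact h
    exact hw0 (funext fun i => by rw [hwi i, hγ0]; rfl)
  · by_contra hcon
    push_neg at hcon
    -- complete: every distinct pair adjacent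
    have hwi : ∀ i, k^2 * w i = γ := by
      intro i
      have h0 := hrow i
      have : ∀ j, BG G k i j * w j = -(k^2 * w j) + (if i = j then k^2 * w j else 0) := by
        intro j
        rw [BG_apply]
        by_cases hij : i = j
        · simp [hij]
        · rw [if_neg hij, if_pos (hcon i j hij), if_neg hij]; ring
      rw [Finset.sum_congr rfl fun j _ => this j] at h0
      rw [Finset.sum_add_distrib, Finset.sum_neg_distrib, ← Finset.mul_sum, hw1,
        Finset.sum_ite_eq] at h0
      simpa using h0
    have hγ0 : γ = 0 := by
      have : ∑ i, k^2 * w i = n * γ := by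
        rw [Finset.sum_congr rfl fun i _ => hwi i]
        simp [Finset.card_univ]
      rw [← Finset.mul_sum, hw1, mul_zero] at this
      have hn' : (n:ℝ) ≠ 0 := Nat.cast_ne_zero.mpr hn.ne'
      rcases mul_eq_zero.mp this.symm with h | h
      · exact absurd h hn'
      · exact h
    apply hw0
    funext i
    have := hwi i
    rw [hγ0] at this
    have hk2 : k^2 ≠ 0 := by positivity
    have hk2' : k^2 * w i = 0 := this
    have : w i = 0 := by
      rcases mul_eq_zero.mp hk2' with h | h
      · exact absurd h hk2
      · exact h
    simpa using this

lemma pad_sum {m dd : ℕ} (hm : m ≤ dd) (g : Fin m → ℝ) :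
    ∑ i : Fin dd, (if h : (i:ℕ) < m then g ⟨i, h⟩ else 0) = ∑ j : Fin m, g j := by
  rw [Fin.sum_univ_eq_sum_range (fun i => if h : i < m then g ⟨i, h⟩ else 0) dd]
  rw [← Finset.sum_subset (Finset.range_subset_range.mpr hm)
    (fun i _ hi => by rw [dif_neg (by simpa using hi)])]
  rw [← Fin.sum_univ_eq_sum_range (fun i => if h : i < m then g ⟨i, h⟩ else 0) m]
  exact Finset.sum_congr rfl fun j _ => by rw [dif_pos j.2]

lemma gram_points {m dd : ℕ} (M : Matrix (Fin m) (Fin m) ℝ) (hpsd : M.PosSemidef)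
    (x : Fin m → ℝ) (hx0 : x ≠ 0) (hMx : M.mulVec x = 0) (hdim : m ≤ dd + 1) :
    ∃ q : Fin m → EuclideanSpace ℝ (Fin dd), ∀ a b, ⟪q a, q b⟫ = M a b := by
  obtain ⟨A, hA⟩ : ∃ A : Matrix (Fin m) (Fin m) ℝ, M = Aᴴ * A := by
    open scoped MatrixOrder in exact CStarAlgebra.nonneg_iff_eq_star_mul_self.mp hpsd.nonneg
  -- A : Matrix (Fin m) (Fin m) ℝ, M = Aᴴ * A
  have hM_entry : ∀ a b, M a b = ∑ i, A i a * A i b := by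
    intro a b
    rw [hA]
    simp [Matrix.mul_apply, Matrix.conjTranspose_apply]
  -- A *ᵥ x = 0
  have hAx : A.mulVec x = 0 := by
    have h1 : x ⬝ᵥ M.mulVec x = (A.mulVec x) ⬝ᵥ (A.mulVec x) := by
      rw [hA]
      rw [show (Aᴴ : Matrix (Fin m) (Fin m) ℝ) = Aᵀ from rfl]
      rw [← Matrix.mulVec_mulVec, Matrix.dotProduct_mulVec, Matrix.vecMul_transpose]
    rw [hMx] at h1
    simp only [dotProduct_zero] at h1
    exact dotProduct_self_eq_zero.mp h1.symm
  -- linear map with range containing columns of A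
  set T : (Fin m → ℝ) →ₗ[ℝ] EuclideanSpace ℝ (Fin m) :=
    (WithLp.linearEquiv 2 ℝ (Fin m → ℝ)).symm.toLinearMap ∘ₗ A.mulVecLin with hT
  have hTapp : ∀ y, T y = (WithLp.equiv 2 (Fin m → ℝ)).symm (A.mulVec y) := fun y => rfl
  have hkerx : T x = 0 := by
    rw [hTapp, hAx]
    rfl
  set W := LinearMap.range T with hW
  have hrank : Module.finrank ℝ W ≤ dd := by
    have h1 := LinearMap.finrank_range_add_finrank_ker T
    rw [Module.finrank_fin_fun] at h1
    have h2 : Module.finrank ℝ (LinearMap.ker T) ≠ 0 := by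
      rw [Ne, Submodule.finrank_eq_zero]
      intro hbot
      have : x ∈ LinearMap.ker T := hkerx
      rw [hbot] at this
      exact hx0 (by simpa using this)
    rw [hW]
    omega
  set mm := Module.finrank ℝ W with hmm
  have hmmd : mm ≤ dd := hrank
  set ob := stdOrthonormalBasis ℝ W with hob
  set v : Fin m → EuclideanSpace ℝ (Fin m) :=
    fun a => (WithLp.equiv 2 (Fin m → ℝ)).symm (fun i => A i a) with hv
  have hvW : ∀ a, v a ∈ W := by
    intro a
    refine ⟨Pi.single a 1, ?_⟩
    rw [hTapp, Matrix.mulVec_single]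
    simp [hv]
    rfl
  have hinner_v : ∀ a b, ⟪v a, v b⟫ = M a b := by
    intro a b
    rw [hM_entry]
    simp [hv, PiLp.inner_apply, RCLike.inner_apply, WithLp.equiv_symm_apply]
    exact Finset.sum_congr rfl fun i _ => mul_comm _ _
  set u : Fin m → EuclideanSpace ℝ (Fin mm) := fun a => ob.repr ⟨v a, hvW a⟩ with hu
  have hinner_u : ∀ a b, ⟪u a, u b⟫ = M a b := by
    intro a b
    rw [hu]
    simp only [LinearIsometryEquiv.inner_map_map]
    rw [Submodule.coe_inner]
    exact hinner_v a b
  set q : Fin m → EuclideanSpace ℝ (Fin dd) := fun a =>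
    (WithLp.equiv 2 (Fin dd → ℝ)).symm
      (fun i => if h : (i:ℕ) < mm then u a ⟨i, h⟩ else 0) with hq
  refine ⟨q, fun a b => ?_⟩
  rw [← hinner_u a b]
  simp only [hq, PiLp.inner_apply, RCLike.inner_apply, conj_trivial,
    WithLp.equiv_symm_apply, PiLp.toLp_apply]
  rw [← pad_sum hmmd (fun j => u b j * u a j)]
  refine Finset.sum_congr rfl fun i _ => ?_
  by_cases h : (i:ℕ) < mm
  · rw [dif_pos h, dif_pos h, dif_pos h]
  · rw [dif_neg h, dif_neg h, dif_neg h, mul_zero]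

private lemma sq_eq_of {a b : ℝ} (ha : 0 ≤ a) (hb : 0 < b) (h : a^2 = b^2) : a = b := by
  nlinarith

theorem forward (d : ℕ) (G : SimpleGraph (Fin (d+2))) [DecidableRel G.Adj]
    (k : ℝ) (hk : 1 < k) (h : RepresentableWith (d+2) d G k) :
    ((∀ w : Fin (d+2) → ℝ, (∑ i, w i) = 0 → 0 ≤ w ⬝ᵥ (BG G k).mulVec w) ∧
       (∃ w : Fin (d+2) → ℝ, w ≠ 0 ∧ (∑ i, w i) = 0 ∧
          ∃ γ : ℝ, (BG G k).mulVec w = fun _ => γ)) := by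
  obtain ⟨p, α₁, α₂, hlt, hpos, hkk, hadj, hnadj, -, -⟩ := h
  set q : Fin (d+2) → EuclideanSpace ℝ (Fin d) := fun i => α₂⁻¹ • p i with hq
  have hpos' : (0:ℝ) < α₂⁻¹ := inv_pos.mpr hpos
  have hdd : ∀ i j, dist (q i) (q j) = α₂⁻¹ * dist (p i) (p j) := by
    intro i j
    show dist (α₂⁻¹ • p i) (α₂⁻¹ • p j) = _
    rw [dist_smul₀, Real.norm_eq_abs, abs_of_pos hpos']
  have hB : ∀ i j, BG G k i j = -(‖q i - q j‖^2) := by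
    intro i j
    rw [← dist_eq_norm, hdd, BG_apply]
    by_cases hij : i = j
    · simp [hij]
    · rw [if_neg hij]
      by_cases ha : G.Adj i j
      · rw [if_pos ha, hadj i j ha, hkk]
        rw [div_eq_inv_mul]
      · rw [if_neg ha, hnadj i j hij ha]
        rw [inv_mul_cancel₀ (ne_of_gt hpos)]
        norm_num
  have hBw : ∀ w : Fin (d+2) → ℝ, (∑ i, w i) = 0 →
      w ⬝ᵥ (BG G k).mulVec w = 2 * ‖∑ i, w i • q i‖^2 := by
    intro w hw
    rw [dot_expand]
    calc ∑ i, ∑ j, w i * w j * BG G k i j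
        = -∑ i, ∑ j, w i * w j * ‖q i - q j‖^2 := by
          rw [← Finset.sum_neg_distrib]
          refine Finset.sum_congr rfl fun i _ => ?_
          rw [← Finset.sum_neg_distrib]
          refine Finset.sum_congr rfl fun j _ => ?_
          rw [hB]; ring
      _ = 2 * ‖∑ i, w i • q i‖^2 := by rw [quad_id q w hw]; ring
  constructor
  · intro w hw
    rw [hBw w hw]
    positivity
  · -- find kernel vector
    set L : (Fin (d+2) → ℝ) →ₗ[ℝ] ℝ × EuclideanSpace ℝ (Fin d) :=
      LinearMap.prod (∑ i, LinearMap.proj i)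
        (∑ i, (LinearMap.proj i : (Fin (d+2) → ℝ) →ₗ[ℝ] ℝ).smulRight (q i)) with hL
    have hLa : ∀ w : Fin (d+2) → ℝ, L w = (∑ i, w i, ∑ i, w i • q i) := by
      intro w
      simp [hL, LinearMap.sum_apply, LinearMap.proj_apply, LinearMap.smulRight_apply]
    have hex : ∃ w : Fin (d+2) → ℝ, w ≠ 0 ∧ L w = 0 := by
      by_contra hcon
      push_neg at hcon
      have hker : LinearMap.ker L = ⊥ :=
        LinearMap.ker_eq_bot'.mpr fun m hm => by
          by_contra hm0; exact hcon m hm0 hm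
      have hle := LinearMap.finrank_le_finrank_of_injective (LinearMap.ker_eq_bot.mp hker)
      rw [Module.finrank_fin_fun, Module.finrank_prod, finrank_euclideanSpace_fin,
        Module.finrank_self] at hle
      omega
    obtain ⟨w, hw0, hLw⟩ := hex
    rw [hLa w, Prod.ext_iff] at hLw
    obtain ⟨hw1, hw2⟩ := hLw
    refine ⟨w, hw0, hw1, -(∑ j, w j * ‖q j‖^2), ?_⟩
    funext i
    rw [mulVec_entry]
    calc ∑ j, BG G k i j * w j = -∑ j, w j * ‖q i - q j‖^2 := by
          rw [← Finset.sum_neg_distrib]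
          refine Finset.sum_congr rfl fun j _ => ?_
          rw [hB]; ring
      _ = -(∑ j, w j * ‖q j‖^2) := by rw [row_id q w hw1 hw2 i]

theorem backward (d : ℕ) (G : SimpleGraph (Fin (d+2))) [DecidableRel G.Adj]
    (k : ℝ) (hk : 1 < k)
    (h1 : ∀ w : Fin (d+2) → ℝ, (∑ i, w i) = 0 → 0 ≤ w ⬝ᵥ (BG G k).mulVec w)
    (h2 : ∃ w : Fin (d+2) → ℝ, w ≠ 0 ∧ (∑ i, w i) = 0 ∧
          ∃ γ : ℝ, (BG G k).mulVec w = fun _ => γ) :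
    RepresentableWith (d+2) d G k := by
  have hk0 : (0:ℝ) < k := lt_trans one_pos hk
  obtain ⟨w, hw0, hw1, γ, hγ⟩ := h2
  have hedges := exists_edges (by omega) G k hk w hw0 hw1 γ hγ
  set ℓ := Fin.last (d+1) with hℓ
  -- M is PSD
  have hherm : (Mmat d G k).IsHermitian := by
    rw [Matrix.IsHermitian]
    ext i j
    rw [Matrix.conjTranspose_apply, Mmat_apply, Mmat_apply]
    rw [BG_symm G k j.castSucc i.castSucc]
    simp only [star_trivial]
    ring
  have hpsd : (Mmat d G k).PosSemidef := by
    refine Matrix.PosSemidef.of_dotProduct_mulVec_nonneg hherm fun x => ?_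
    have hsum : ∑ i, (Fin.snoc x (-(∑ a, x a)) : Fin (d+2) → ℝ) i = 0 := by
      rw [Fin.sum_univ_castSucc (f := (Fin.snoc x (-(∑ a, x a)) : Fin (d+2) → ℝ))]
      simp
    have := h1 _ hsum
    rw [stepA] at this
    simpa using by linarith
  obtain ⟨hx0, hMx⟩ := stepB d G k w hw0 hw1 γ hγ
  obtain ⟨q, hq⟩ := gram_points (dd := d) (Mmat d G k) hpsd _ hx0 hMx (by omega)
  set p : Fin (d+2) → EuclideanSpace ℝ (Fin d) := Fin.snoc q 0 with hp
  have hqq : ∀ a b : Fin (d+1), ‖q a - q b‖^2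
      = Mmat d G k a a - 2 * Mmat d G k a b + Mmat d G k b b := by
    intro a b
    rw [← real_inner_self_eq_norm_sq, inner_sub_left, inner_sub_right, inner_sub_right,
      hq a a, hq a b, hq b a, hq b b]
    have : Mmat d G k b a = Mmat d G k a b := by
      rw [Mmat_apply, Mmat_apply, BG_symm G k b.castSucc a.castSucc]; ring
    rw [this]; ring
  have hdist2 : ∀ i j : Fin (d+2), dist (p i) (p j)^2 = -(BG G k i j) := by
    have hcc : ∀ a b : Fin (d+1),
        dist (p a.castSucc) (p b.castSucc)^2 = -(BG G k a.castSucc b.castSucc) := by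
      intro a b
      rw [hp]
      simp only [Fin.snoc_castSucc]
      rw [dist_eq_norm, hqq a b, Mmat_apply, Mmat_apply, Mmat_apply,
        BG_diag, BG_diag]
      ring
    have hcl : ∀ a : Fin (d+1),
        dist (p a.castSucc) (p ℓ)^2 = -(BG G k a.castSucc ℓ) := by
      intro a
      rw [hp]
      simp only [Fin.snoc_castSucc, hℓ, Fin.snoc_last]
      rw [dist_eq_norm, sub_zero, ← real_inner_self_eq_norm_sq, hq a a, Mmat_apply,
        BG_diag]
      ring
    intro i j
    induction i using Fin.lastCases with
    | last =>
        induction j using Fin.lastCases with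
        | last => rw [BG_diag]; simp [hp]
        | cast b => rw [dist_comm, BG_symm G k ℓ b.castSucc]; exact hcl b
    | cast a =>
        induction j using Fin.lastCases with
        | last => exact hcl a
        | cast b => exact hcc a b
  refine ⟨p, k, 1, hk, one_pos, (div_one k).symm, ?_, ?_, hedges.1, hedges.2⟩
  · intro i j hadj
    have hij : i ≠ j := G.ne_of_adj hadj
    have : dist (p i) (p j)^2 = k^2 := by
      rw [hdist2 i j, BG_apply, if_neg hij, if_pos hadj, neg_neg]
    exact sq_eq_of dist_nonneg hk0 this
  · intro i j hij hnadj
    have : dist (p i) (p j)^2 = 1^2 := by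
      rw [hdist2 i j, BG_apply, if_neg hij, if_neg hnadj, neg_neg, one_pow]
    exact sq_eq_of dist_nonneg one_pos this

end Stmt4Aux

/-- **Proposition 3.** `G` on `d+2` vertices is representable in `ℝ^d` with
ratio `k > 1` iff (1) `wᵀ B_G(k) w ≥ 0` for all `w ∈ 𝟙^⊥`, and (2) there is a
nonzero `w ∈ 𝟙^⊥` with `B_G(k) w = γ 𝟙` for some real `γ`. -/
theorem stmt4 (d : ℕ) (G : SimpleGraph (Fin (d+2))) [DecidableRel G.Adj]
    (k : ℝ) (hk : 1 < k) :
    RepresentableWith (d+2) d G k ↔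
      ((∀ w : Fin (d+2) → ℝ, (∑ i, w i) = 0 → 0 ≤ w ⬝ᵥ (BG G k).mulVec w) ∧
       (∃ w : Fin (d+2) → ℝ, w ≠ 0 ∧ (∑ i, w i) = 0 ∧
          ∃ γ : ℝ, (BG G k).mulVec w = fun _ => γ)) := by
  constructor
  · exact forward d G k hk
  · rintro ⟨h1, h2⟩
    exact backward d G k hk h1 h2
end

section
/- Let G be a graph on d+2 vertices, let k > 1, and let B'_G = (I − 𝟙·e₁ᵀ)·B_G(k)·(I − e₁·𝟙ᵀ), where e₁ is the first standard basis vector of ℝ^{d+2}. Then the nullspace of B'_G equals the sum of the span of e₁ and the subspace { w ∈ 𝟙^⊥ : B_G(k)·w = γ·𝟙 for some real number γ }. -/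
open Matrix Finset
open scoped Classical

section Helpers

variable {m : ℕ}

lemma Pmul_aux (x : Fin (m+2) → ℝ) :
    ((1 - Matrix.vecMulVec (fun _ => (1:ℝ)) (Pi.single 0 1)).mulVec x)
      = x - (fun _ => x 0) := by
  funext i
  simp [Matrix.mulVec, Matrix.sub_apply, Matrix.one_apply, Matrix.vecMulVec_apply,
    Pi.single_apply, sub_mul, ite_mul, Finset.sum_sub_distrib, Finset.sum_ite_eq,
    Finset.sum_ite_eq', dotProduct]

lemma Qmul_aux (x : Fin (m+2) → ℝ) :
    ((1 - Matrix.vecMulVec (Pi.single 0 1) (fun _ => (1:ℝ))).mulVec x)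
      = x - (∑ i, x i) • (Pi.single 0 1 : Fin (m+2) → ℝ) := by
  funext i
  simp [Matrix.mulVec, Matrix.sub_apply, Matrix.one_apply, Matrix.vecMulVec_apply,
    Pi.single_apply, sub_mul, mul_sub, ite_mul, mul_ite, Finset.sum_sub_distrib,
    Finset.sum_ite_eq, Finset.sum_ite_eq', dotProduct, mul_comm]

end Helpers

/-- **Corollary (nullspace of `B'_G`).** With
`B'_G = (I - 𝟙 e₁ᵀ) B_G(k) (I - e₁ 𝟙ᵀ)`, the nullspace of `B'_G` is the sum of
the span of `e₁` and the subspace of vectors `w ∈ 𝟙^⊥` with `B_G(k) w = γ 𝟙`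
for some real `γ`. -/
theorem stmt5 (d : ℕ) (G : SimpleGraph (Fin (d+2))) [DecidableRel G.Adj]
    (k : ℝ) (hk : 1 < k)
    (B' : Matrix (Fin (d+2)) (Fin (d+2)) ℝ)
    (hB' : B' = (1 - Matrix.vecMulVec (fun _ => 1) (Pi.single 0 1)) * BG G k *
                (1 - Matrix.vecMulVec (Pi.single 0 1) (fun _ => 1))) :
    ∀ v : Fin (d+2) → ℝ,
      B'.mulVec v = 0 ↔
        ∃ (c γ : ℝ) (w : Fin (d+2) → ℝ), (∑ i, w i) = 0 ∧
          (BG G k).mulVec w = (fun _ => γ) ∧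
          v = c • (Pi.single (0 : Fin (d+2)) (1 : ℝ) : Fin (d+2) → ℝ) + w := by
  subst hB'
  intro v
  constructor
  · intro h
    set c := ∑ i, v i with hc
    set w : Fin (d+2) → ℝ := v - c • (Pi.single 0 1 : Fin (d+2) → ℝ) with hw
    have hsum1 : (∑ i : Fin (d+2), (Pi.single 0 1 : Fin (d+2) → ℝ) i) = 1 := by
      simp [Pi.single_apply]
    have hws : (∑ i, w i) = 0 := by
      simp only [hw, Pi.sub_apply, Pi.smul_apply, Finset.sum_sub_distrib]
      rw [← Finset.smul_sum]
      simp [hsum1, hc]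
    have hQ : (1 - Matrix.vecMulVec (Pi.single 0 1 : Fin (d+2) → ℝ)
          (fun _ => (1:ℝ))).mulVec v = w := by
      rw [Qmul_aux v]
    have h2 : (1 - Matrix.vecMulVec ((fun _ => 1 : Fin (d+2) → ℝ))
          (Pi.single 0 1 : Fin (d+2) → ℝ)).mulVec ((BG G k).mulVec w) = 0 := by
      rw [← hQ, Matrix.mulVec_mulVec, Matrix.mulVec_mulVec]
      exact h
    rw [Pmul_aux] at h2
    have h3 : (BG G k).mulVec w = fun _ => (BG G k).mulVec w 0 := by
      funext i
      have := congrFun h2 i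
      simpa [sub_eq_zero] using this
    refine ⟨c, (BG G k).mulVec w 0, w, hws, h3, by simp [hw]⟩
  · rintro ⟨c, γ, w, hws, hBw, rfl⟩
    have hsum1 : (∑ i : Fin (d+2), (Pi.single 0 1 : Fin (d+2) → ℝ) i) = 1 := by
      simp [Pi.single_apply]
    have hsv : (∑ i, (c • (Pi.single 0 1 : Fin (d+2) → ℝ) + w) i) = c := by
      simp only [Pi.add_apply, Pi.smul_apply, Finset.sum_add_distrib]
      rw [← Finset.smul_sum]
      simp [hsum1, hws]
    have hQ : (1 - Matrix.vecMulVec (Pi.single 0 1 : Fin (d+2) → ℝ)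
          (fun _ => (1:ℝ))).mulVec (c • (Pi.single 0 1 : Fin (d+2) → ℝ) + w) = w := by
      rw [Qmul_aux, hsv]
      abel
    rw [← Matrix.mulVec_mulVec, ← Matrix.mulVec_mulVec, hQ, hBw, Pmul_aux]
    funext i
    simp
end

section
/- Let G be a graph on d+2 vertices and k > 1, and suppose there exists a nonzero vector w ∈ 𝟙^⊥ and a real number γ with B_G(k)·w = γ·𝟙. Then det(x·J + B_G(k)) is the zero polynomial in the variable x if and only if det(B_G(k)) = 0. -/
open Matrix Finset
open scoped Classical

/-- **Lemma 5.** If there is a nonzero `w ∈ 𝟙^⊥` with `B_G(k) w = γ 𝟙` for some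
real `γ`, then the polynomial (in `x`) `det(x·J + B_G(k))` is zero iff
`det(B_G(k)) = 0`. -/
theorem stmt7 (d : ℕ) (G : SimpleGraph (Fin (d+2))) [DecidableRel G.Adj]
    (k : ℝ) (hk : 1 < k)
    (hw : ∃ w : Fin (d+2) → ℝ, w ≠ 0 ∧ (∑ i, w i) = 0 ∧
      ∃ γ : ℝ, (BG G k).mulVec w = fun _ => γ) :
    ((Polynomial.X : Polynomial ℝ) • (Jmat (d+2)).map (fun x => Polynomial.C x)
        + (BG G k).map (fun x => Polynomial.C x)).det = 0 ↔
      (BG G k).det = 0 := by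
  obtain ⟨w, hw0, hwsum, γ, hwB⟩ := hw
  set B := BG G k with hB
  -- evaluation of the polynomial determinant
  have heval : ∀ x : ℝ,
      Polynomial.eval x (((Polynomial.X : Polynomial ℝ) • (Jmat (d+2)).map (fun a => Polynomial.C a)
        + B.map (fun a => Polynomial.C a)).det) = (x • Jmat (d+2) + B).det := by
    intro x
    rw [← Polynomial.coe_evalRingHom, RingHom.map_det]
    congr 1
    ext i j
    simp [Matrix.map_apply, Jmat]
  have hJw : (Jmat (d+2)).mulVec w = 0 := by
    funext i
    simp [Jmat, Matrix.mulVec, dotProduct, hwsum]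
  constructor
  · intro h
    have := heval 0
    rw [h] at this
    simpa using this.symm
  · intro h
    have hzero : ∀ x : ℝ, (x • Jmat (d+2) + B).det = 0 := by
      intro x
      rw [← Matrix.exists_mulVec_eq_zero_iff]
      by_cases hγ : γ = 0
      · refine ⟨w, hw0, ?_⟩
        rw [Matrix.add_mulVec, Matrix.smul_mulVec, hJw, hwB]
        funext i; simp [hγ]
      · obtain ⟨v, hv0, hvB⟩ := (Matrix.exists_mulVec_eq_zero_iff).2 h
        set t : ℝ := x * (∑ i, v i) / γ with ht
        refine ⟨v - t • w, ?_, ?_⟩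
        · intro hu
          have hveq : v = t • w := by
            have := sub_eq_zero.mp hu; exact this
          have : B.mulVec v = t • (fun _ => γ) := by
            rw [hveq, Matrix.mulVec_smul, hwB]
          rw [hvB] at this
          have htγ : t * γ = 0 := by
            have := congrFun this.symm 0
            simpa using this
          have ht0 : t = 0 := by
            rcases mul_eq_zero.mp htγ with h' | h'
            · exact h'
            · exact absurd h' hγ
          rw [ht0, zero_smul] at hveq
          exact hv0 hveq
        · have hJv : (Jmat (d+2)).mulVec v = fun _ => (∑ i, v i) := by
            funext i
            simp [Jmat, Matrix.mulVec, dotProduct]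
          rw [Matrix.mulVec_sub, Matrix.mulVec_smul, Matrix.add_mulVec, Matrix.add_mulVec,
            Matrix.smul_mulVec, Matrix.smul_mulVec, hJw, hJv, hvB, hwB]
          funext i
          simp [ht]
          field_simp
          ring
    have : ((Polynomial.X : Polynomial ℝ) • (Jmat (d+2)).map (fun a => Polynomial.C a)
        + B.map (fun a => Polynomial.C a)).det = (0 : Polynomial ℝ) := by
      apply Polynomial.funext
      intro x
      rw [heval x, hzero x]
      simp
    exact this
end

section
/- Let G be a graph on d+2 vertices, let k > 1, and set B̄ = (1/(k²−1))·I − A_G, where A_G is the adjacency matrix of G. Then G has a spherical representation in ℝ^d with distance ratio k if and only if all of the following hold: (1̄) wᵀ·B̄·w ≥ 0 for every w ∈ 𝟙^⊥; (2̄) there exists a nonzero w ∈ 𝟙^⊥ and a real number γ with B̄·w = γ·𝟙; (3̄) det(B̄) = 0; (4̄) there exists a real number r₀ such that r·J + B̄ is positive semidefinite for every r ≥ r₀. -/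
open Matrix Finset
open scoped Classical

noncomputable section AuxAll
open Matrix Finset

section Spectral
variable {m : ℕ}
variable {m : ℕ}

lemma entry_spectral {A : Matrix (Fin m) (Fin m) ℝ} (hH : A.IsHermitian) (i j : Fin m) :
    A i j = ∑ t, hH.eigenvalues t *
      ((hH.eigenvectorUnitary : Matrix (Fin m) (Fin m) ℝ) i t *
       (hH.eigenvectorUnitary : Matrix (Fin m) (Fin m) ℝ) j t) := by
  conv_lhs => rw [hH.spectral_theorem]
  rw [Unitary.conjStarAlgAut_apply]
  rw [Matrix.mul_apply]
  congr 1; ext t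
  rw [Matrix.mul_apply]
  simp [Matrix.diagonal, Matrix.star_apply, Finset.sum_ite_eq, mul_comm, mul_assoc, mul_left_comm]

lemma exists_gram (d : ℕ) (A : Matrix (Fin m) (Fin m) ℝ) (hA : A.PosSemidef)
    (hrank : A.rank ≤ d) :
    ∃ p : Fin m → EuclideanSpace ℝ (Fin d), ∀ i j, inner ℝ (p i) (p j) = A i j := by
  have hH := hA.1
  have hcard : Fintype.card {t // hH.eigenvalues t ≠ 0} ≤ Fintype.card (Fin d) := by
    rw [Fintype.card_fin]
    exact le_trans (le_of_eq hH.rank_eq_card_non_zero_eigs.symm) hrank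
  obtain ⟨e⟩ := Function.Embedding.nonempty_of_card_le hcard
  set U : Matrix (Fin m) (Fin m) ℝ := (hH.eigenvectorUnitary : Matrix (Fin m) (Fin m) ℝ) with hU
  set μ := hH.eigenvalues with hμ
  refine ⟨fun i => (WithLp.equiv 2 (Fin d → ℝ)).symm
      (fun l => ∑ t : {t // μ t ≠ 0}, if e t = l then Real.sqrt (μ t) * U i t else 0), ?_⟩
  intro i j
  rw [PiLp.inner_apply]
  simp only [WithLp.equiv_symm_apply, PiLp.toLp_apply, RCLike.inner_apply, starRingEnd_apply, star_trivial]
  refine (Finset.sum_congr rfl fun l _ => mul_comm _ _).trans ?_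
  have hsq : ∀ t : {t // μ t ≠ 0},
      (Real.sqrt (μ t) * U i t) * (Real.sqrt (μ t) * U j t) = μ t * (U i t * U j t) := by
    intro t
    have h0 : 0 ≤ μ t := hA.eigenvalues_nonneg t
    rw [mul_mul_mul_comm, Real.mul_self_sqrt h0]
  calc ∑ l, (∑ t : {t // μ t ≠ 0}, if e t = l then Real.sqrt (μ t) * U i t else 0) *
        (∑ t : {t // μ t ≠ 0}, if e t = l then Real.sqrt (μ t) * U j t else 0)
      = ∑ l, ∑ t : {t // μ t ≠ 0}, ∑ t' : {t // μ t ≠ 0},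
          (if e t = l then Real.sqrt (μ t) * U i t else 0) *
          (if e t' = l then Real.sqrt (μ t') * U j t' else 0) := by
        refine Finset.sum_congr rfl fun l _ => ?_
        rw [Finset.sum_mul_sum]
    _ = ∑ t : {t // μ t ≠ 0}, ∑ t' : {t // μ t ≠ 0}, ∑ l,
          (if e t = l then Real.sqrt (μ t) * U i t else 0) *
          (if e t' = l then Real.sqrt (μ t') * U j t' else 0) := by
        rw [Finset.sum_comm]
        exact Finset.sum_congr rfl fun t _ => Finset.sum_comm
    _ = ∑ t : {t // μ t ≠ 0}, μ t * (U i t * U j t) := by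
        refine Finset.sum_congr rfl fun t _ => ?_
        rw [Finset.sum_eq_single t]
        · rw [Finset.sum_eq_single (e t)]
          · simp [hsq t]
          · intro l _ hl
            simp [Ne.symm hl]
          · simp
        · intro t' _ ht'
          refine Finset.sum_eq_zero fun l _ => ?_
          by_cases h1 : e t = l
          · have h2 : ¬ e t' = l := fun h => ht' (e.injective (h.trans h1.symm))
            simp [h2]
          · simp [h1]
        · simp
    _ = ∑ t ∈ Finset.univ.filter (fun t => μ t ≠ 0), μ t * (U i t * U j t) := by
        exact (Finset.sum_subtype (Finset.univ.filter (fun t => μ t ≠ 0))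
          (fun x => by simp) (fun t => μ t * (U i t * U j t))).symm
    _ = ∑ t, μ t * (U i t * U j t) := by
        refine Finset.sum_filter_of_ne fun t _ h => ?_
        intro h0
        exact h (by simp [h0])
    _ = A i j := (entry_spectral hH i j).symm

end Spectral

section Aux
variable {m : ℕ}
variable {m : ℕ}

lemma Jmat_mulVec (x : Fin m → ℝ) : Jmat m *ᵥ x = fun _ => ∑ i, x i := by
  ext j; simp [Jmat, Matrix.mulVec, dotProduct]

lemma dot_const (x : Fin m → ℝ) (c : ℝ) : x ⬝ᵥ (fun _ => c) = (∑ i, x i) * c := by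
  simp [dotProduct, Finset.sum_mul]

lemma const_dot (x : Fin m → ℝ) (c : ℝ) : (fun _ => c : Fin m → ℝ) ⬝ᵥ x = c * (∑ i, x i) := by
  simp [dotProduct, Finset.mul_sum]

lemma mulVec_Q (B : Matrix (Fin m) (Fin m) ℝ) (r : ℝ) (x : Fin m → ℝ) :
    (r • Jmat m + B) *ᵥ x = (fun _ => r * ∑ i, x i) + B *ᵥ x := by
  rw [Matrix.add_mulVec, Matrix.smul_mulVec, Jmat_mulVec]
  rfl

lemma quad_Q (B : Matrix (Fin m) (Fin m) ℝ) (r : ℝ) (x : Fin m → ℝ) :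
    x ⬝ᵥ (r • Jmat m + B) *ᵥ x = r * (∑ i, x i)^2 + x ⬝ᵥ B *ᵥ x := by
  rw [mulVec_Q, dotProduct_add, dot_const]
  ring

lemma dot_symm (B : Matrix (Fin m) (Fin m) ℝ) (hsym : Bᵀ = B) (x y : Fin m → ℝ) :
    x ⬝ᵥ B *ᵥ y = (B *ᵥ x) ⬝ᵥ y := by
  rw [Matrix.dotProduct_mulVec]; nth_rewrite 1 [← hsym]; rw [Matrix.vecMul_transpose]

lemma psd_quad {B : Matrix (Fin m) (Fin m) ℝ} (h : B.PosSemidef) (x : Fin m → ℝ) :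
    0 ≤ x ⬝ᵥ B *ᵥ x := by
  simpa using h.dotProduct_mulVec_nonneg x

lemma herm_of_symm {B : Matrix (Fin m) (Fin m) ℝ} (h : Bᵀ = B) : B.IsHermitian := by
  rw [Matrix.IsHermitian, Matrix.conjTranspose_eq_transpose_of_trivial, h]

lemma Jmat_symm : (Jmat m)ᵀ = Jmat m := by ext i j; simp [Jmat]

lemma smulJ_psd {r : ℝ} (hr : 0 ≤ r) : (r • Jmat m).PosSemidef := by
  refine .of_dotProduct_mulVec_nonneg (herm_of_symm (by rw [Matrix.transpose_smul, Jmat_symm])) fun x => ?_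
  have : star x = x := by funext i; exact star_trivial _
  rw [this, Matrix.smul_mulVec, Jmat_mulVec, dotProduct_smul, dot_const,
    smul_eq_mul]
  nlinarith [sq_nonneg (∑ i, x i)]

/-- the sum functional -/
def sumL (m : ℕ) : (Fin m → ℝ) →ₗ[ℝ] ℝ where
  toFun x := ∑ i, x i
  map_add' x y := by simp [Finset.sum_add_distrib]
  map_smul' c x := by simp [Finset.mul_sum]

lemma sumL_apply (x : Fin m → ℝ) : sumL m x = ∑ i, x i := rfl

end Aux

section MainA
variable {d : ℕ}
variable {d : ℕ}

lemma finrank_ker_ge (M : Matrix (Fin (d+2)) (Fin (d+2)) ℝ) (hrank : M.rank ≤ d) :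
    2 ≤ Module.finrank ℝ (LinearMap.ker M.mulVecLin) := by
  have h1 := LinearMap.finrank_range_add_finrank_ker M.mulVecLin
  have h2 : Module.finrank ℝ (Fin (d+2) → ℝ) = d + 2 := by
    simp [Module.finrank_pi]
  have h3 : M.rank = Module.finrank ℝ (LinearMap.range M.mulVecLin) := rfl
  omega

lemma rank_le_of_ker (M : Matrix (Fin (d+2)) (Fin (d+2)) ℝ)
    (h2 : 2 ≤ Module.finrank ℝ (LinearMap.ker M.mulVecLin)) : M.rank ≤ d := by
  have h1 := LinearMap.finrank_range_add_finrank_ker M.mulVecLin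
  have h2' : Module.finrank ℝ (Fin (d+2) → ℝ) = d + 2 := by
    simp [Module.finrank_pi]
  have h3 : M.rank = Module.finrank ℝ (LinearMap.range M.mulVecLin) := rfl
  omega

-- two independent kernel vectors give finrank ker ≥ 2
lemma two_le_finrank_ker (M : Matrix (Fin (d+2)) (Fin (d+2)) ℝ)
    {w x : Fin (d+2) → ℝ} (hw : M *ᵥ w = 0) (hx : M *ᵥ x = 0)
    (hw0 : w ≠ 0) (hwsum : (∑ i, w i) = 0) (hxsum : (∑ i, x i) ≠ 0) :
    2 ≤ Module.finrank ℝ (LinearMap.ker M.mulVecLin) := by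
  have hwK : w ∈ LinearMap.ker M.mulVecLin := by
    rw [LinearMap.mem_ker, Matrix.mulVecLin_apply, hw]
  have hxK : x ∈ LinearMap.ker M.mulVecLin := by
    rw [LinearMap.mem_ker, Matrix.mulVecLin_apply, hx]
  have li : LinearIndependent ℝ ![w, x] := by
    rw [LinearIndependent.pair_iff]
    intro a b hab
    have hsum : a * (∑ i, w i) + b * (∑ i, x i) = 0 := by
      have := congrArg (fun v => ∑ i, v i) hab
      simpa [Finset.sum_add_distrib, Finset.mul_sum] using this
    rw [hwsum, mul_zero, zero_add] at hsum
    have hb : b = 0 := by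
      rcases mul_eq_zero.mp hsum with h | h
      · exact h
      · exact absurd h hxsum
    subst hb
    simp only [zero_smul, add_zero] at hab
    rcases smul_eq_zero.mp hab with h | h
    · exact ⟨h, rfl⟩
    · exact absurd h hw0
  set K := LinearMap.ker M.mulVecLin
  have li2 : LinearIndependent ℝ (![(⟨w, hwK⟩ : K), ⟨x, hxK⟩]) := by
    apply LinearIndependent.of_comp K.subtype
    convert li
    funext t
    fin_cases t <;> rfl
    rfl
  simpa using li2.fintype_card_le_finrank
end MainA

section Main2
open Matrix Finset
variable {d : ℕ} (Bbar : Matrix (Fin (d+2)) (Fin (d+2)) ℝ)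

lemma alg_forward (hsym : Bbarᵀ = Bbar) (s : ℝ)
    (hPSD : (s • Jmat (d+2) + Bbar).PosSemidef)
    (hrank : (s • Jmat (d+2) + Bbar).rank ≤ d) :
    ((∀ w : Fin (d+2) → ℝ, (∑ i, w i) = 0 → 0 ≤ w ⬝ᵥ Bbar.mulVec w) ∧
     (∃ w : Fin (d+2) → ℝ, w ≠ 0 ∧ (∑ i, w i) = 0 ∧
        ∃ γ : ℝ, Bbar.mulVec w = fun _ => γ) ∧
     Bbar.det = 0 ∧
     (∃ r₀ : ℝ, ∀ r : ℝ, r₀ ≤ r → (r • Jmat (d+2) + Bbar).PosSemidef)) := by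
  -- find a kernel vector orthogonal to 𝟙
  obtain ⟨w, hw0, hwsum, hwker⟩ :
      ∃ w : Fin (d+2) → ℝ, w ≠ 0 ∧ (∑ i, w i) = 0 ∧ Bbar *ᵥ w = 0 := by
    set M := s • Jmat (d+2) + Bbar with hM
    set K := LinearMap.ker M.mulVecLin with hKdef
    set Kφ := LinearMap.ker (sumL (d+2)) with hKφdef
    have hφr : LinearMap.range (sumL (d+2)) = ⊤ := by
      rw [LinearMap.range_eq_top]
      intro c
      refine ⟨fun _ => c / (d+2), ?_⟩
      rw [sumL_apply, Finset.sum_const, Finset.card_univ, Fintype.card_fin, nsmul_eq_mul]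
      field_simp
      push_cast; ring
    have hφker : Module.finrank ℝ Kφ = d + 1 := by
      have h2 : Module.finrank ℝ (Fin (d+2) → ℝ) = d + 2 := by simp [Module.finrank_pi]
      have h1 := LinearMap.finrank_range_add_finrank_ker (sumL (d+2))
      rw [hφr, ← hKφdef] at h1
      simp only [finrank_top, Module.finrank_self, h2] at h1
      omega
    have hK2 : 2 ≤ Module.finrank ℝ K := finrank_ker_ge M hrank
    have hsup := Submodule.finrank_sup_add_finrank_inf_eq K Kφ
    have hsuple : Module.finrank ℝ ↥(K ⊔ Kφ) ≤ d + 2 := by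
      have := Submodule.finrank_le (K ⊔ Kφ)
      simpa [Module.finrank_pi] using this
    have hinf : 0 < Module.finrank ℝ ↥(K ⊓ Kφ) := by omega
    have : Nontrivial ↥(K ⊓ Kφ) := Module.nontrivial_of_finrank_pos hinf
    obtain ⟨v, hv⟩ := exists_ne (0 : ↥(K ⊓ Kφ))
    have hvK : (v : Fin (d+2) → ℝ) ∈ K := (Submodule.mem_inf.mp v.2).1
    have hvφ : (v : Fin (d+2) → ℝ) ∈ Kφ := (Submodule.mem_inf.mp v.2).2
    have hvsum : (∑ i, (v : Fin (d+2) → ℝ) i) = 0 := hvφ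
    have hvM : M *ᵥ (v : Fin (d+2) → ℝ) = 0 := by
      have := hvK
      rwa [LinearMap.mem_ker, Matrix.mulVecLin_apply] at this
    refine ⟨v, ?_, hvsum, ?_⟩
    · intro h0
      exact hv (Subtype.ext h0)
    · have := hvM
      rw [hM, mulVec_Q, hvsum, mul_zero] at this
      funext i
      have := congrFun this i
      simpa using this
  refine ⟨?_, ⟨w, hw0, hwsum, 0, by rw [show Bbar.mulVec w = Bbar *ᵥ w from rfl, hwker]; rfl⟩,
    ?_, ⟨s, fun r hr => ?_⟩⟩
  · intro y hy
    have h := psd_quad hPSD y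
    rw [quad_Q, hy] at h
    simpa using h
  · exact Matrix.exists_mulVec_eq_zero_iff.mp ⟨w, hw0, hwker⟩
  · have hdecomp : r • Jmat (d+2) + Bbar
        = (s • Jmat (d+2) + Bbar) + (r - s) • Jmat (d+2) := by
      have : r • Jmat (d+2) = s • Jmat (d+2) + (r - s) • Jmat (d+2) := by
        rw [← add_smul]; ring_nf
      rw [this]; abel
    rw [hdecomp]
    exact hPSD.add (smulJ_psd (by linarith))

lemma alg_backward (hsym : Bbarᵀ = Bbar)
    (h1 : ∀ w : Fin (d+2) → ℝ, (∑ i, w i) = 0 → 0 ≤ w ⬝ᵥ Bbar.mulVec w)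
    (h2 : ∃ w : Fin (d+2) → ℝ, w ≠ 0 ∧ (∑ i, w i) = 0 ∧
        ∃ γ : ℝ, Bbar.mulVec w = fun _ => γ)
    (h3 : Bbar.det = 0)
    (h4 : ∃ r₀ : ℝ, ∀ r : ℝ, r₀ ≤ r → (r • Jmat (d+2) + Bbar).PosSemidef) :
    ∃ s : ℝ, (s • Jmat (d+2) + Bbar).PosSemidef ∧ (s • Jmat (d+2) + Bbar).rank ≤ d := by
  obtain ⟨r₀, hr₀⟩ := h4
  set N : ℝ := (d:ℝ) + 2 with hNdef
  have hN : (0:ℝ) < N := by rw [hNdef]; positivity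
  have hNsum : (∑ _i : Fin (d+2), (1:ℝ)) = N := by
    rw [Finset.sum_const, Finset.card_univ, Fintype.card_fin, nsmul_eq_mul, mul_one, hNdef]
    push_cast; ring
  -- Step a: a kernel vector orthogonal to 𝟙
  obtain ⟨w, hw0, hwsum, hwker⟩ :
      ∃ w : Fin (d+2) → ℝ, w ≠ 0 ∧ (∑ i, w i) = 0 ∧ Bbar *ᵥ w = 0 := by
    obtain ⟨w, hw0, hwsum, γ, hγ⟩ := h2
    by_cases hγ0 : γ = 0
    · exact ⟨w, hw0, hwsum, by rw [show Bbar *ᵥ w = Bbar.mulVec w from rfl, hγ, hγ0]; rfl⟩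
    · obtain ⟨v, hv0, hvker⟩ := Matrix.exists_mulVec_eq_zero_iff.mpr h3
      have hvsum : (∑ i, v i) = 0 := by
        have e1 : v ⬝ᵥ Bbar *ᵥ w = (∑ i, v i) * γ := by
          rw [show Bbar *ᵥ w = Bbar.mulVec w from rfl, hγ, dot_const]
        have e2 : v ⬝ᵥ Bbar *ᵥ w = 0 := by
          rw [dot_symm Bbar hsym, hvker, zero_dotProduct]
        rw [e2] at e1
        rcases mul_eq_zero.mp e1.symm with h | h
        · exact h
        · exact absurd h hγ0
      exact ⟨v, hv0, hvsum, hvker⟩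
  -- Step b: x with Bbar x constant and ∑ x ≠ 0
  obtain ⟨x, cx, hxker, hxsum⟩ :
      ∃ (x : Fin (d+2) → ℝ) (cx : ℝ), Bbar *ᵥ x = (fun _ => cx) ∧ (∑ i, x i) ≠ 0 := by
    by_cases hex : ∃ v, Bbar *ᵥ v = 0 ∧ (∑ i, v i) ≠ 0
    · obtain ⟨v, hv1, hv2⟩ := hex
      exact ⟨v, 0, by rw [hv1]; rfl, hv2⟩
    · push_neg at hex
      -- 𝟙 is in the range of Bbar
      have hone : (fun _ => (1:ℝ)) ∈ LinearMap.range Bbar.mulVecLin := by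
        by_contra hno
        obtain ⟨f, hf1, hf2⟩ := Submodule.exists_dual_map_eq_bot_of_notMem hno inferInstance
        set u : Fin (d+2) → ℝ := fun i => f (fun j => if i = j then 1 else 0) with hu
        have hfu : ∀ y : Fin (d+2) → ℝ, f y = y ⬝ᵥ u := by
          intro y
          rw [LinearMap.pi_apply_eq_sum_univ f y]
          simp [dotProduct, hu, smul_eq_mul]
        have hzero : ∀ v, f (Bbar *ᵥ v) = 0 := by
          intro v
          have hmem : Bbar *ᵥ v ∈ LinearMap.range Bbar.mulVecLin :=
            ⟨v, by rw [Matrix.mulVecLin_apply]⟩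
          have : f (Bbar *ᵥ v) ∈ (LinearMap.range Bbar.mulVecLin).map f :=
            Submodule.mem_map_of_mem hmem
          rw [hf2] at this
          simpa using this
        have hkeru : Bbar *ᵥ u = 0 := by
          funext j
          have h := hzero (Pi.single j 1)
          rw [hfu] at h
          have : (Bbar *ᵥ Pi.single j 1) ⬝ᵥ u = u ⬝ᵥ Bbar *ᵥ Pi.single j 1 := by
            rw [dotProduct_comm]
          rw [this, dot_symm Bbar hsym, dotProduct_single] at h
          simpa using h
        have hsumu : (∑ i, u i) = 0 := hex u hkeru
        apply hf1
        rw [hfu]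
        rw [const_dot, one_mul, hsumu]
      obtain ⟨z, hz⟩ := hone
      rw [Matrix.mulVecLin_apply] at hz
      by_cases hzsum : (∑ i, z i) = 0
      · -- contradiction with h4
        exfalso
        set b : ℝ := (fun _ => (1:ℝ)) ⬝ᵥ Bbar *ᵥ (fun _ => (1:ℝ)) with hb
        set r : ℝ := max r₀ ((1 - b)/N^2) with hrdef
        have hrge : r₀ ≤ r := le_max_left _ _
        have hPSD := hr₀ r hrge
        set a : ℝ := r * N^2 + b with ha
        have hage : 1 ≤ a := by
          have h5 : (1 - b)/N^2 ≤ r := le_max_right _ _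
          have hN2 : 0 < N^2 := by positivity
          rw [div_le_iff₀ hN2] at h5
          nlinarith
        set t : ℝ := -N/a with ht
        set y : Fin (d+2) → ℝ := z + t • (fun _ => (1:ℝ)) with hy
        have hysum : (∑ i, y i) = t * N := by
          rw [hy]
          simp only [Pi.add_apply, Pi.smul_apply, smul_eq_mul, mul_one]
          rw [Finset.sum_add_distrib, hzsum, zero_add, Finset.sum_const, Finset.card_univ,
            Fintype.card_fin, nsmul_eq_mul, hNdef]
          push_cast; ring
        have hyq : y ⬝ᵥ Bbar *ᵥ y = 2 * t * N + t^2 * b := by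
          have e0 : Bbar *ᵥ y = (Bbar *ᵥ z) + t • (Bbar *ᵥ (fun _ => 1)) := by
            rw [hy, Matrix.mulVec_add, Matrix.mulVec_smul]
          have ezz : z ⬝ᵥ Bbar *ᵥ z = 0 := by
            rw [hz, dot_const, hzsum, zero_mul]
          have ez1 : z ⬝ᵥ Bbar *ᵥ (fun _ => 1) = N := by
            rw [dot_symm Bbar hsym, hz, const_dot, one_mul, hNsum]
          have e1z : (fun _ => (1:ℝ)) ⬝ᵥ Bbar *ᵥ z = N := by
            rw [hz, const_dot, one_mul, hNsum]
          rw [hy]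
          rw [Matrix.mulVec_add, Matrix.mulVec_smul, add_dotProduct,
            dotProduct_add, dotProduct_add, smul_dotProduct,
            dotProduct_smul, dotProduct_smul, smul_dotProduct]
          rw [show (z ⬝ᵥ Bbar *ᵥ z) = 0 from ezz]
          rw [show (z ⬝ᵥ Bbar *ᵥ (fun _ => 1)) = N from ez1]
          rw [show ((fun _ => (1:ℝ)) ⬝ᵥ Bbar *ᵥ z) = N from e1z]
          rw [← hb]
          simp only [smul_eq_mul]
          ring
        have hquad := psd_quad hPSD y
        rw [quad_Q, hysum, hyq] at hquad
        have : r * (t*N)^2 + (2*t*N + t^2*b) = -(N^2/a) := by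
          rw [ht]
          field_simp
          ring
        rw [this] at hquad
        have : (0:ℝ) < N^2/a := by positivity
        linarith
      · exact ⟨z, 1, hz, hzsum⟩
  -- Step c
  set Sx : ℝ := ∑ i, x i with hSx
  set s : ℝ := -cx / Sx with hs
  refine ⟨s, .of_dotProduct_mulVec_nonneg (herm_of_symm ?_) ?_, ?_⟩
  · rw [Matrix.transpose_add, Matrix.transpose_smul, Jmat_symm, hsym]
  · -- PSD
    intro y
    have hst : star y = y := by funext i; exact star_trivial _
    rw [hst, quad_Q]
    set T : ℝ := ∑ i, y i with hT
    set u : Fin (d+2) → ℝ := y - (T/Sx) • x with hu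
    have husum : (∑ i, u i) = 0 := by
      rw [hu]
      simp only [Pi.sub_apply, Pi.smul_apply, smul_eq_mul]
      rw [Finset.sum_sub_distrib, ← Finset.mul_sum, ← hSx, ← hT]
      field_simp
      simp
    have hub := h1 u husum
    have hy : y = u + (T/Sx) • x := by rw [hu]; abel
    have e2 : u ⬝ᵥ Bbar *ᵥ x = 0 := by
      rw [hxker, dot_const, husum, zero_mul]
    have e3 : x ⬝ᵥ Bbar *ᵥ u = 0 := by
      rw [dot_symm Bbar hsym, hxker, const_dot, husum, mul_zero]
    have e4 : x ⬝ᵥ Bbar *ᵥ x = Sx * cx := by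
      rw [hxker, dot_const, ← hSx]
    have expand : y ⬝ᵥ Bbar *ᵥ y = u ⬝ᵥ Bbar *ᵥ u + (T/Sx) * (u ⬝ᵥ Bbar *ᵥ x)
        + (T/Sx) * (x ⬝ᵥ Bbar *ᵥ u) + (T/Sx)^2 * (x ⬝ᵥ Bbar *ᵥ x) := by
      rw [hy]
      rw [Matrix.mulVec_add, Matrix.mulVec_smul, add_dotProduct,
        dotProduct_add, dotProduct_add, smul_dotProduct,
        dotProduct_smul, dotProduct_smul, smul_dotProduct]
      simp only [smul_eq_mul]
      ring
    have hcancel : s * T^2 + (T/Sx)^2 * (Sx * cx) = 0 := by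
      rw [hs]
      field_simp
      ring
    rw [expand, e2, e3, e4]
    rw [show y ⬝ᵥ Bbar.mulVec y = y ⬝ᵥ Bbar *ᵥ y from rfl] at *
    nlinarith [hub, hcancel]
  · -- rank
    apply rank_le_of_ker
    have hkw : (s • Jmat (d+2) + Bbar) *ᵥ w = 0 := by
      rw [mulVec_Q, hwsum, mul_zero, hwker]
      funext i; simp
    have hkx : (s • Jmat (d+2) + Bbar) *ᵥ x = 0 := by
      rw [mulVec_Q, hxker, ← hSx]
      funext i
      simp only [Pi.add_apply]
      rw [hs]
      field_simp
      simp
    exact two_le_finrank_ker _ hkw hkx hw0 hwsum hxsum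

end Main2

section Geom
open Matrix Finset
variable {d : ℕ}

lemma inner_coords (x y : EuclideanSpace ℝ (Fin d)) :
    inner ℝ x y = ∑ l, x l * y l := by
  rw [PiLp.inner_apply]
  simp [RCLike.inner_apply]
  exact Finset.sum_congr rfl fun l _ => mul_comm _ _

lemma dist_sq (x y : EuclideanSpace ℝ (Fin d)) :
    dist x y ^ 2 = inner ℝ x x - 2 * inner ℝ x y + inner ℝ y y := by
  rw [dist_eq_norm, norm_sub_sq_real, real_inner_self_eq_norm_sq, real_inner_self_eq_norm_sq]

lemma Q_apply (Bbar : Matrix (Fin (d+2)) (Fin (d+2)) ℝ) (s : ℝ) (i j : Fin (d+2)) :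
    (s • Jmat (d+2) + Bbar) i j = s + Bbar i j := by
  simp [Jmat, Matrix.add_apply, Matrix.smul_apply, smul_eq_mul]

variable (G : SimpleGraph (Fin (d+2))) [DecidableRel G.Adj] (k : ℝ)
  (Bbar : Matrix (Fin (d+2)) (Fin (d+2)) ℝ)

lemma Bbar_apply (hB : Bbar = (k ^ 2 - 1)⁻¹ • (1 : Matrix (Fin (d+2)) (Fin (d+2)) ℝ)
    - G.adjMatrix ℝ) (i j : Fin (d+2)) :
    Bbar i j = (if i = j then (k^2-1)⁻¹ else 0) - (if G.Adj i j then 1 else 0) := by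
  rw [hB]
  simp [Matrix.sub_apply, Matrix.smul_apply, Matrix.one_apply, SimpleGraph.adjMatrix_apply,
    smul_eq_mul, mul_ite, mul_one, mul_zero]

lemma geom_forward (hk : 1 < k)
    (hB : Bbar = (k ^ 2 - 1)⁻¹ • (1 : Matrix (Fin (d+2)) (Fin (d+2)) ℝ) - G.adjMatrix ℝ)
    (h : SphericalWith (d+2) d G k) :
    ∃ s : ℝ, (s • Jmat (d+2) + Bbar).PosSemidef ∧ (s • Jmat (d+2) + Bbar).rank ≤ d := by
  obtain ⟨p, c, r, ⟨α₁, α₂, hlt, hpos, hkk, hadj, hnadj, hE, hNE⟩, hsph⟩ := h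
  have hk2 : (0:ℝ) < k^2 - 1 := by nlinarith
  have hα2 : α₂ ≠ 0 := ne_of_gt hpos
  have hα1 : α₁ = k * α₂ := by rw [hkk]; field_simp
  set cc : ℝ := 2/(α₂^2 * (k^2-1)) with hccdef
  have hccpos : 0 < cc := by
    apply div_pos two_pos (mul_pos (pow_pos hpos 2) hk2)
  set s : ℝ := (r^2 - α₂^2/2) * cc with hsdef
  set X : Matrix (Fin d) (Fin (d+2)) ℝ :=
    Matrix.of fun l i => Real.sqrt cc * ((p i - c) l) with hX
  have key : ∀ i j, inner ℝ (p i - c) (p j - c) = r^2 - dist (p i) (p j)^2/2 := by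
    intro i j
    have hnorm : dist (p i) (p j)^2
        = ‖p i - c‖^2 - 2*inner ℝ (p i - c) (p j - c) + ‖p j - c‖^2 := by
      rw [dist_eq_norm, show p i - p j = (p i - c) - (p j - c) from by abel, norm_sub_sq_real]
    have h1 : ‖p i - c‖ = r := by rw [← dist_eq_norm]; exact hsph i
    have h2 : ‖p j - c‖ = r := by rw [← dist_eq_norm]; exact hsph j
    rw [h1, h2] at hnorm
    linarith
  have hXX : Xᵀ * X = s • Jmat (d+2) + Bbar := by
    ext i j
    rw [Matrix.mul_apply, Q_apply, Bbar_apply G k Bbar hB]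
    simp only [Matrix.transpose_apply, hX, Matrix.of_apply]
    have e1 : ∑ l, (Real.sqrt cc * (p i - c) l) * (Real.sqrt cc * (p j - c) l)
        = cc * ∑ l, (p i - c) l * (p j - c) l := by
      rw [Finset.mul_sum]
      refine Finset.sum_congr rfl fun l _ => ?_
      rw [mul_mul_mul_comm, Real.mul_self_sqrt hccpos.le]
    rw [e1, ← inner_coords, key]
    by_cases hij : i = j
    · subst hij
      simp only [↓reduceIte]
      simp only [if_pos rfl, if_neg (G.irrefl), dist_self, sub_zero]
      rw [hsdef, hccdef]
      field_simp
      ring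
    · by_cases hadjij : G.Adj i j
      · rw [hadj i j hadjij, hα1]
        simp only [if_neg hij, if_pos hadjij]
        rw [hsdef, hccdef]
        field_simp
        ring
      · rw [hnadj i j hij hadjij]
        simp only [if_neg hij, if_neg hadjij]
        rw [hsdef, hccdef]
        field_simp
        ring
  refine ⟨s, ?_, ?_⟩
  · rw [← hXX]
    have := Matrix.posSemidef_conjTranspose_mul_self X
    rwa [Matrix.conjTranspose_eq_transpose_of_trivial] at this
  · rw [← hXX, Matrix.rank_transpose_mul_self]
    exact le_trans (Matrix.rank_le_card_height X) (by simp)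

lemma geom_backward (hk : 1 < k)
    (hB : Bbar = (k ^ 2 - 1)⁻¹ • (1 : Matrix (Fin (d+2)) (Fin (d+2)) ℝ) - G.adjMatrix ℝ)
    (hE : ∃ i j, G.Adj i j) (hNE : ∃ i j, i ≠ j ∧ ¬ G.Adj i j)
    (s : ℝ) (hPSD : (s • Jmat (d+2) + Bbar).PosSemidef)
    (hrank : (s • Jmat (d+2) + Bbar).rank ≤ d) :
    SphericalWith (d+2) d G k := by
  have hk2 : (0:ℝ) < k^2 - 1 := by nlinarith
  have hk0 : (0:ℝ) < k := lt_trans one_pos hk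
  obtain ⟨p, hp⟩ := exists_gram d _ hPSD hrank
  set c2 : ℝ := (k^2-1)/2 with hc2
  have hc2pos : 0 < c2 := by rw [hc2]; linarith
  have hqinner : ∀ i j, inner ℝ (Real.sqrt c2 • p i) (Real.sqrt c2 • p j)
      = c2 * ((s • Jmat (d+2) + Bbar) i j) := by
    intro i j
    rw [real_inner_smul_left, real_inner_smul_right, hp i j, ← mul_assoc,
      Real.mul_self_sqrt hc2pos.le]
  have hqd : ∀ i j, i ≠ j → dist (Real.sqrt c2 • p i) (Real.sqrt c2 • p j)^2
      = c2 * (2*(k^2-1)⁻¹ + 2*(if G.Adj i j then 1 else 0)) := by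
    intro i j hij
    rw [dist_sq, hqinner, hqinner, hqinner, Q_apply, Q_apply, Q_apply,
      Bbar_apply G k Bbar hB, Bbar_apply G k Bbar hB, Bbar_apply G k Bbar hB]
    simp only [if_pos rfl, if_neg hij, if_neg (G.irrefl), sub_zero, if_true]
    ring
  have hdadj : ∀ i j, G.Adj i j → dist (Real.sqrt c2 • p i) (Real.sqrt c2 • p j) = k := by
    intro i j hadj
    have h2 : dist (Real.sqrt c2 • p i) (Real.sqrt c2 • p j)^2 = k^2 := by
      rw [hqd i j (G.ne_of_adj hadj), if_pos hadj, hc2]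
      field_simp
      ring
    calc dist (Real.sqrt c2 • p i) (Real.sqrt c2 • p j)
        = Real.sqrt (dist (Real.sqrt c2 • p i) (Real.sqrt c2 • p j)^2) :=
          (Real.sqrt_sq dist_nonneg).symm
      _ = Real.sqrt (k^2) := by rw [h2]
      _ = k := Real.sqrt_sq hk0.le
  have hdnadj : ∀ i j, i ≠ j → ¬ G.Adj i j →
      dist (Real.sqrt c2 • p i) (Real.sqrt c2 • p j) = 1 := by
    intro i j hij hnadj
    have h2 : dist (Real.sqrt c2 • p i) (Real.sqrt c2 • p j)^2 = 1 := by
      rw [hqd i j hij, if_neg hnadj, hc2]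
      field_simp
      simp
    calc dist (Real.sqrt c2 • p i) (Real.sqrt c2 • p j)
        = Real.sqrt (dist (Real.sqrt c2 • p i) (Real.sqrt c2 • p j)^2) :=
          (Real.sqrt_sq dist_nonneg).symm
      _ = Real.sqrt 1 := by rw [h2]
      _ = 1 := Real.sqrt_one
  have hsphere : ∀ i, dist (Real.sqrt c2 • p i) 0 = Real.sqrt (c2 * (s + (k^2-1)⁻¹)) := by
    intro i
    rw [dist_zero_right, norm_eq_sqrt_real_inner, hqinner i i, Q_apply,
      Bbar_apply G k Bbar hB]
    simp [G.irrefl]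
  exact ⟨fun i => Real.sqrt c2 • p i, 0, Real.sqrt (c2 * (s + (k^2-1)⁻¹)),
    ⟨k, 1, hk, one_pos, (div_one k).symm, hdadj, hdnadj, hE, hNE⟩, hsphere⟩

end Geom

section Edges
open Matrix Finset
variable {d : ℕ} (G : SimpleGraph (Fin (d+2))) [DecidableRel G.Adj] (k : ℝ)
  (Bbar : Matrix (Fin (d+2)) (Fin (d+2)) ℝ)

lemma edges_of_cond2 (hk : 1 < k)
    (hB : Bbar = (k ^ 2 - 1)⁻¹ • (1 : Matrix (Fin (d+2)) (Fin (d+2)) ℝ) - G.adjMatrix ℝ)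
    (h2 : ∃ w : Fin (d+2) → ℝ, w ≠ 0 ∧ (∑ i, w i) = 0 ∧
        ∃ γ : ℝ, Bbar.mulVec w = fun _ => γ) :
    (∃ i j, G.Adj i j) ∧ (∃ i j : Fin (d+2), i ≠ j ∧ ¬ G.Adj i j) := by
  have hk2 : (0:ℝ) < k^2 - 1 := by nlinarith
  have hinvpos : (0:ℝ) < (k^2-1)⁻¹ := inv_pos.mpr hk2
  obtain ⟨w, hw0, hwsum, γ, hγ⟩ := h2
  have hconst : ∀ a : ℝ, a ≠ 0 → (∀ i, a * w i = γ) → False := by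
    intro a ha hkey
    have hγ0 : γ = 0 := by
      have hs : ∑ i, (a * w i) = ∑ i : Fin (d+2), γ := Finset.sum_congr rfl fun i _ => hkey i
      rw [← Finset.mul_sum, hwsum, mul_zero] at hs
      rw [Finset.sum_const, Finset.card_univ, Fintype.card_fin, nsmul_eq_mul] at hs
      have hd : ((d:ℝ) + 2) ≠ 0 := by positivity
      have : ((d + 2 : ℕ) : ℝ) * γ = 0 := hs.symm
      rcases mul_eq_zero.mp this with h | h
      · exfalso; apply hd; push_cast at h ⊢; linarith
      · exact h
    apply hw0
    funext i
    have := hkey i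
    rw [hγ0] at this
    rcases mul_eq_zero.mp this with h | h
    · exact absurd h ha
    · exact h
  constructor
  · by_contra hno
    push_neg at hno
    refine hconst ((k^2-1)⁻¹) (ne_of_gt hinvpos) fun i => ?_
    have e : (Bbar *ᵥ w) i = (k^2-1)⁻¹ * w i := by
      show (∑ j, Bbar i j * w j) = (k^2-1)⁻¹ * w i
      rw [Finset.sum_congr rfl fun j _ => by
        rw [Bbar_apply G k Bbar hB, if_neg (hno i j), sub_zero]]
      simp only [ite_mul, zero_mul]
      rw [Finset.sum_ite_eq Finset.univ i (fun j => (k^2-1)⁻¹ * w j)]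
      simp
    rw [← e]
    exact congrFun hγ i
  · by_contra hno
    push_neg at hno
    refine hconst ((k^2-1)⁻¹ + 1) (by positivity) fun i => ?_
    have e : (Bbar *ᵥ w) i = ((k^2-1)⁻¹ + 1) * w i := by
      show (∑ j, Bbar i j * w j) = ((k^2-1)⁻¹ + 1) * w i
      have hsplit : ∀ j, Bbar i j * w j
          = (if i = j then (k^2-1)⁻¹ * w j else 0) - (w j - (if i = j then w j else 0)) := by
        intro j
        rw [Bbar_apply G k Bbar hB]
        by_cases hij : i = j
        · subst hij
          simp [G.irrefl]
        · have hadj : G.Adj i j := hno i j hij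
          simp only [if_neg hij, if_pos hadj]
          ring
      rw [Finset.sum_congr rfl fun j _ => hsplit j, Finset.sum_sub_distrib,
        Finset.sum_sub_distrib,
        Finset.sum_ite_eq Finset.univ i (fun j => (k^2-1)⁻¹ * w j),
        Finset.sum_ite_eq Finset.univ i (fun j => w j), hwsum]
      simp
      ring
    rw [← e]
    exact congrFun hγ i

end Edges

end AuxAll

/-- **Proposition 6.** With `B̄ = (1/(k²-1))·I - A_G`, a graph `G` on `d+2`
vertices has a spherical representation in `ℝ^d` with ratio `k` iff
(1̄) `wᵀ B̄ w ≥ 0` for all `w ∈ 𝟙^⊥`, (2̄) some nonzero `w ∈ 𝟙^⊥` has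
`B̄ w = γ 𝟙`, (3̄) `det B̄ = 0`, and (4̄) `r·J + B̄` is positive semidefinite for
all sufficiently large `r`. -/
theorem stmt8 (d : ℕ) (G : SimpleGraph (Fin (d+2))) [DecidableRel G.Adj]
    (k : ℝ) (hk : 1 < k)
    (Bbar : Matrix (Fin (d+2)) (Fin (d+2)) ℝ)
    (hB : Bbar = (k ^ 2 - 1)⁻¹ • (1 : Matrix (Fin (d+2)) (Fin (d+2)) ℝ)
        - G.adjMatrix ℝ) :
    SphericalWith (d+2) d G k ↔
      ((∀ w : Fin (d+2) → ℝ, (∑ i, w i) = 0 → 0 ≤ w ⬝ᵥ Bbar.mulVec w) ∧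
       (∃ w : Fin (d+2) → ℝ, w ≠ 0 ∧ (∑ i, w i) = 0 ∧
          ∃ γ : ℝ, Bbar.mulVec w = fun _ => γ) ∧
       Bbar.det = 0 ∧
       (∃ r₀ : ℝ, ∀ r : ℝ, r₀ ≤ r → (r • Jmat (d+2) + Bbar).PosSemidef)) := by
  have hsym : Bbarᵀ = Bbar := by
    rw [hB, Matrix.transpose_sub, Matrix.transpose_smul, Matrix.transpose_one,
      SimpleGraph.transpose_adjMatrix]
  constructor
  · intro h
    obtain ⟨s, hPSD, hrank⟩ := geom_forward G k Bbar hk hB h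
    exact alg_forward Bbar hsym s hPSD hrank
  · rintro ⟨h1, h2, h3, h4⟩
    obtain ⟨hE, hNE⟩ := edges_of_cond2 G k Bbar hk hB h2
    obtain ⟨s, hPSD, hrank⟩ := alg_backward Bbar hsym h1 h2 h3 h4
    exact geom_backward G k Bbar hk hB hE hNE s hPSD hrank
end
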